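/- arXiv:1902.04095 — 8 statements merged into one kernel-verified Lean document; each statement's English description precedes it below -/
import Mathlib

section
/- For every x ≠ y in ℝ³ and every column index j ∈ {1,2,3}, the j-th column E_j(·,y) of the Kupradze tensor satisfies the time-harmonic Navier equation μΔ_x E_j(x,y) + (λ+μ)∇_x(∇_x·E_j(x,y)) + ρω² E_j(x,y) = 0. -/
noncomputable section

open scoped BigOperators

/-- Three-dimensional Euclidean space. -/
abbrev V3 : Type := EuclideanSpace ℝ (Fin 3)

/-- Partial derivative in the `i`-th coordinate direction. -/
def pd (i : Fin 3) (f : V3 → ℂ) : V3 → ℂ :=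
  fun x => fderiv ℝ f x (EuclideanSpace.single i (1 : ℝ))

/-- Laplacian. -/
def lap (f : V3 → ℂ) : V3 → ℂ := fun x => ∑ i, pd i (pd i f) x

/-- Directional derivative `ν·∇` along the constant vector `ν`. -/
def dirD (ν : Fin 3 → ℝ) (f : V3 → ℂ) : V3 → ℂ :=
  fun x => ∑ i, (ν i : ℂ) * pd i f x

/-- Divergence of a vector field. -/
def vdiv (v : Fin 3 → V3 → ℂ) : V3 → ℂ := fun x => ∑ i, pd i (v i) x

/-- Levi–Civita symbol on `Fin 3`. -/
def eps (i j k : Fin 3) : ℝ :=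
  if (i, j, k) = (0, 1, 2) ∨ (i, j, k) = (1, 2, 0) ∨ (i, j, k) = (2, 0, 1) then 1
  else if (i, j, k) = (0, 2, 1) ∨ (i, j, k) = (2, 1, 0) ∨ (i, j, k) = (1, 0, 2) then -1
  else 0

/-- Curl of a vector field: `(curl v)_i = Σ_{l,m} ε_{ilm} ∂_l v_m`. -/
def curl (v : Fin 3 → V3 → ℂ) : Fin 3 → V3 → ℂ :=
  fun i x => ∑ l, ∑ m, (eps i l m : ℂ) * pd l (v m) x

/-- Cross product of a constant real vector with a complex vector. -/
def crossR (ν : Fin 3 → ℝ) (w : Fin 3 → ℂ) : Fin 3 → ℂ :=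
  fun i => ∑ l, ∑ m, (eps i l m : ℂ) * (ν l : ℂ) * w m

/-- Günter derivative `M(∂,ν)` acting on a vector field,
with entries `m^{ij}(∂,ν) = ν^j ∂_i − ν^i ∂_j`. -/
def gunterM (ν : Fin 3 → ℝ) (v : Fin 3 → V3 → ℂ) : Fin 3 → V3 → ℂ :=
  fun i x => ∑ j, ((ν j : ℂ) * pd i (v j) x - (ν i : ℂ) * pd j (v j) x)

/-- Traction operator `T(∂,ν)v = 2μ ∂_ν v + λ ν (∇·v) + μ ν × curl v`. -/
def traction (lam μ : ℝ) (ν : Fin 3 → ℝ) (v : Fin 3 → V3 → ℂ) : Fin 3 → V3 → ℂ :=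
  fun i x => 2 * (μ : ℂ) * dirD ν (v i) x + (lam : ℂ) * (ν i : ℂ) * vdiv v x
    + (μ : ℂ) * crossR ν (fun m => curl v m x) i

/-- Helmholtz fundamental solution `γ_k(x,y) = exp(i k |x−y|)/(4π|x−y|)`. -/
def gammaK (k : ℂ) (x y : V3) : ℂ :=
  Complex.exp (Complex.I * k * (‖x - y‖ : ℂ)) / ((4 * Real.pi * ‖x - y‖ : ℝ) : ℂ)

/-- Kupradze tensor entry `E(x,y)_{ij}`:
`E = (1/μ)γ_{k_s} I + (1/(ρω²)) ∇_x∇_x^⊤[γ_{k_s} − γ_{k_p}]`. -/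
def kupE (μ ρ ω : ℝ) (ks kp : ℂ) (i j : Fin 3) (x y : V3) : ℂ :=
  (1 / (μ : ℂ)) * gammaK ks x y * (if i = j then 1 else 0)
    + (1 / ((ρ : ℂ) * (ω : ℂ) ^ 2)) *
      pd i (pd j (fun w => gammaK ks w y - gammaK kp w y)) x

/-- Thermoelastic fundamental-solution block `E₁₁`, entry `(i,j)`. -/
def E11 (μ ρ ω : ℝ) (ks kp k1 k2 : ℂ) (i j : Fin 3) (x y : V3) : ℂ :=
  (1 / (μ : ℂ)) * gammaK ks x y * (if i = j then 1 else 0)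
    + (1 / ((ρ : ℂ) * (ω : ℂ) ^ 2)) *
      pd i (pd j (fun w => gammaK ks w y - gammaK k1 w y)) x
    - (1 / ((ρ : ℂ) * (ω : ℂ) ^ 2)) * ((kp ^ 2 - k1 ^ 2) / (k1 ^ 2 - k2 ^ 2)) *
      pd i (pd j (fun w => gammaK k1 w y - gammaK k2 w y)) x

/-- Thermoelastic fundamental-solution block `E₁₂`, component `j`. -/
def E12 (lam μ gam : ℝ) (k1 k2 : ℂ) (j : Fin 3) (x y : V3) : ℂ :=
  -((gam : ℂ) / ((k1 ^ 2 - k2 ^ 2) * ((lam : ℂ) + 2 * (μ : ℂ)))) *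
    pd j (fun w => gammaK k1 w y - gammaK k2 w y) x

/-- Thermoelastic fundamental-solution block `E₂₁`, component `j`. -/
def E21 (lam μ ω η : ℝ) (k1 k2 : ℂ) (j : Fin 3) (x y : V3) : ℂ :=
  (Complex.I * (ω : ℂ) * (η : ℂ) / ((k1 ^ 2 - k2 ^ 2) * ((lam : ℂ) + 2 * (μ : ℂ)))) *
    pd j (fun w => gammaK k1 w y - gammaK k2 w y) x

/-- Thermoelastic fundamental-solution block `E₂₂`. -/
def E22 (kp k1 k2 : ℂ) (x y : V3) : ℂ :=
  -(1 / (k1 ^ 2 - k2 ^ 2)) *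
    ((kp ^ 2 - k1 ^ 2) * gammaK k1 x y - (kp ^ 2 - k2 ^ 2) * gammaK k2 x y)


namespace Kup
open Complex

/-- radial profile functions -/
def P0 (k : ℂ) (t : ℝ) : ℂ :=
  Complex.exp (Complex.I * k * ((Real.sqrt t : ℝ) : ℂ)) / ((4 * Real.pi * Real.sqrt t : ℝ) : ℂ)

def P1 (k : ℂ) (t : ℝ) : ℂ :=
  Complex.exp (Complex.I * k * ((Real.sqrt t : ℝ) : ℂ)) *
    (Complex.I * k * ((Real.sqrt t : ℝ) : ℂ) - 1) /
    (8 * (Real.pi : ℂ) * ((Real.sqrt t : ℝ) : ℂ) ^ 3)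

def P2 (k : ℂ) (t : ℝ) : ℂ :=
  Complex.exp (Complex.I * k * ((Real.sqrt t : ℝ) : ℂ)) *
    (-k ^ 2 * ((Real.sqrt t : ℝ) : ℂ) ^ 2 - 3 * (Complex.I * k * ((Real.sqrt t : ℝ) : ℂ)) + 3) /
    (16 * (Real.pi : ℂ) * ((Real.sqrt t : ℝ) : ℂ) ^ 5)

def P3 (k : ℂ) (t : ℝ) : ℂ :=
  Complex.exp (Complex.I * k * ((Real.sqrt t : ℝ) : ℂ)) *
    (-Complex.I * k ^ 3 * ((Real.sqrt t : ℝ) : ℂ) ^ 3 + 6 * k ^ 2 * ((Real.sqrt t : ℝ) : ℂ) ^ 2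
      + 15 * Complex.I * k * ((Real.sqrt t : ℝ) : ℂ) - 15) /
    (32 * (Real.pi : ℂ) * ((Real.sqrt t : ℝ) : ℂ) ^ 7)

def P4 (k : ℂ) (t : ℝ) : ℂ :=
  Complex.exp (Complex.I * k * ((Real.sqrt t : ℝ) : ℂ)) *
    (k ^ 4 * ((Real.sqrt t : ℝ) : ℂ) ^ 4 + 10 * Complex.I * k ^ 3 * ((Real.sqrt t : ℝ) : ℂ) ^ 3
      - 45 * k ^ 2 * ((Real.sqrt t : ℝ) : ℂ) ^ 2 - 105 * Complex.I * k * ((Real.sqrt t : ℝ) : ℂ)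
      + 105) /
    (64 * (Real.pi : ℂ) * ((Real.sqrt t : ℝ) : ℂ) ^ 9)

variable {k : ℂ} {t : ℝ}

lemma sqrtC_ne_zero (ht : 0 < t) : ((Real.sqrt t : ℝ) : ℂ) ≠ 0 := by
  exact_mod_cast (Real.sqrt_pos.2 ht).ne'

lemma piC_ne_zero : (Real.pi : ℂ) ≠ 0 := by exact_mod_cast Real.pi_ne_zero

lemma hasDerivAt_sqrtC (ht : 0 < t) :
    HasDerivAt (fun u : ℝ => ((Real.sqrt u : ℝ) : ℂ)) (((1 / (2 * Real.sqrt t) : ℝ) : ℂ)) t :=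
  (Real.hasDerivAt_sqrt ht.ne').ofReal_comp


lemma hasDerivAt_sqrtC_pow (n : ℕ) (ht : 0 < t) :
    HasDerivAt (fun u : ℝ => ((Real.sqrt u : ℝ) : ℂ) ^ n)
      (((1 / (2 * Real.sqrt t) : ℝ) : ℂ) * ((n : ℂ) * ((Real.sqrt t : ℝ) : ℂ) ^ (n - 1))) t := by
  simpa [Function.comp_def, smul_eq_mul] using
    (hasDerivAt_pow n ((Real.sqrt t : ℝ) : ℂ)).scomp t (hasDerivAt_sqrtC ht)

lemma hasDerivAt_P0 (ht : 0 < t) : HasDerivAt (P0 k) (P1 k t) t := by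
  have hs := hasDerivAt_sqrtC ht
  have hsne := sqrtC_ne_zero ht
  have hnum : HasDerivAt (fun u : ℝ => Complex.exp (Complex.I * k * ((Real.sqrt u : ℝ) : ℂ)))
      (Complex.exp (Complex.I * k * ((Real.sqrt t : ℝ) : ℂ)) *
        (Complex.I * k * ((1 / (2 * Real.sqrt t) : ℝ) : ℂ))) t := (hs.const_mul _).cexp
  have hden : HasDerivAt (fun u : ℝ => ((4 * Real.pi * Real.sqrt u : ℝ) : ℂ))
      ((4 * Real.pi : ℂ) * ((1 / (2 * Real.sqrt t) : ℝ) : ℂ)) t := by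
    have : HasDerivAt (fun u : ℝ => ((4 * Real.pi : ℝ) : ℂ) * ((Real.sqrt u : ℝ) : ℂ))
        (((4 * Real.pi : ℝ) : ℂ) * ((1 / (2 * Real.sqrt t) : ℝ) : ℂ)) t := hs.const_mul _
    convert this using 2 with u
    · push_cast; ring
    · push_cast; ring
  have hdne : ((4 * Real.pi * Real.sqrt t : ℝ) : ℂ) ≠ 0 := by
    have : (4 * Real.pi * Real.sqrt t : ℝ) ≠ 0 := by positivity
    exact_mod_cast this
  have := hnum.div hden hdne
  convert this using 1
  · rfl
  · rfl
  unfold P1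
  have h2 : ((1 / (2 * Real.sqrt t) : ℝ) : ℂ) = 1 / (2 * ((Real.sqrt t : ℝ) : ℂ)) := by push_cast; ring
  rw [h2]
  have hpi := piC_ne_zero
  push_cast
  field_simp
  ring

set_option maxHeartbeats 1000000 in
lemma hasDerivAt_P1 (ht : 0 < t) : HasDerivAt (P1 k) (P2 k t) t := by
  have hs := hasDerivAt_sqrtC ht
  have hsne := sqrtC_ne_zero ht
  have hpi := piC_ne_zero
  have hnum : HasDerivAt
      (fun u : ℝ => Complex.exp (Complex.I * k * ((Real.sqrt u : ℝ) : ℂ)) *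
        (Complex.I * k * ((Real.sqrt u : ℝ) : ℂ) - 1))
      (Complex.exp (Complex.I * k * ((Real.sqrt t : ℝ) : ℂ)) *
          (Complex.I * k * ((1 / (2 * Real.sqrt t) : ℝ) : ℂ)) *
          (Complex.I * k * ((Real.sqrt t : ℝ) : ℂ) - 1)
        + Complex.exp (Complex.I * k * ((Real.sqrt t : ℝ) : ℂ)) *
          (Complex.I * k * ((1 / (2 * Real.sqrt t) : ℝ) : ℂ))) t :=
    ((hs.const_mul _).cexp).mul ((hs.const_mul _).sub_const 1)
  have hden : HasDerivAt (fun u : ℝ => 8 * (Real.pi : ℂ) * ((Real.sqrt u : ℝ) : ℂ) ^ 3)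
      ((8 * (Real.pi : ℂ)) * (((1 / (2 * Real.sqrt t) : ℝ) : ℂ) * ((3 : ℂ) * ((Real.sqrt t : ℝ) : ℂ) ^ 2))) t :=
    (hasDerivAt_sqrtC_pow 3 ht).const_mul (8 * (Real.pi : ℂ))
  have hdne : 8 * (Real.pi : ℂ) * ((Real.sqrt t : ℝ) : ℂ) ^ 3 ≠ 0 := by
    simp [hsne, hpi]
  have := hnum.div hden hdne
  convert this using 1
  · rfl
  · rfl
  unfold P2
  have h2 : ((1 / (2 * Real.sqrt t) : ℝ) : ℂ) = 1 / (2 * ((Real.sqrt t : ℝ) : ℂ)) := by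
    push_cast; ring
  rw [h2]
  field_simp
  ring_nf
  simp only [Complex.I_sq]
  ring

set_option maxHeartbeats 1000000 in
lemma hasDerivAt_P2 (ht : 0 < t) : HasDerivAt (P2 k) (P3 k t) t := by
  have hs := hasDerivAt_sqrtC ht
  have hsne := sqrtC_ne_zero ht
  have hpi := piC_ne_zero
  have hnum : HasDerivAt
      (fun u : ℝ => Complex.exp (Complex.I * k * ((Real.sqrt u : ℝ) : ℂ)) *
        (-k ^ 2 * ((Real.sqrt u : ℝ) : ℂ) ^ 2 - 3 * (Complex.I * k * ((Real.sqrt u : ℝ) : ℂ)) + 3))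
      (Complex.exp (Complex.I * k * ((Real.sqrt t : ℝ) : ℂ)) *
          (Complex.I * k * ((1 / (2 * Real.sqrt t) : ℝ) : ℂ)) *
          (-k ^ 2 * ((Real.sqrt t : ℝ) : ℂ) ^ 2 - 3 * (Complex.I * k * ((Real.sqrt t : ℝ) : ℂ)) + 3)
        + Complex.exp (Complex.I * k * ((Real.sqrt t : ℝ) : ℂ)) *
          (-k ^ 2 * (((1 / (2 * Real.sqrt t) : ℝ) : ℂ) * ((2 : ℂ) * ((Real.sqrt t : ℝ) : ℂ) ^ 1))
            - 3 * (Complex.I * k * ((1 / (2 * Real.sqrt t) : ℝ) : ℂ)))) t :=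
    ((hs.const_mul _).cexp).mul
      ((((hasDerivAt_sqrtC_pow 2 ht).const_mul (-k ^ 2)).sub ((hs.const_mul (Complex.I * k)).const_mul 3)).add_const 3)
  have hden : HasDerivAt (fun u : ℝ => 16 * (Real.pi : ℂ) * ((Real.sqrt u : ℝ) : ℂ) ^ 5)
      ((16 * (Real.pi : ℂ)) * (((1 / (2 * Real.sqrt t) : ℝ) : ℂ) * ((5 : ℂ) * ((Real.sqrt t : ℝ) : ℂ) ^ 4))) t :=
    (hasDerivAt_sqrtC_pow 5 ht).const_mul (16 * (Real.pi : ℂ))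
  have hdne : 16 * (Real.pi : ℂ) * ((Real.sqrt t : ℝ) : ℂ) ^ 5 ≠ 0 := by
    simp [hsne, hpi]
  have := hnum.div hden hdne
  convert this using 1
  · rfl
  · rfl
  unfold P3
  have h2 : ((1 / (2 * Real.sqrt t) : ℝ) : ℂ) = 1 / (2 * ((Real.sqrt t : ℝ) : ℂ)) := by
    push_cast; ring
  rw [h2]
  field_simp
  ring_nf
  simp only [Complex.I_sq]
  ring

set_option maxHeartbeats 1000000 in
lemma hasDerivAt_P3 (ht : 0 < t) : HasDerivAt (P3 k) (P4 k t) t := by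
  have hs := hasDerivAt_sqrtC ht
  have hsne := sqrtC_ne_zero ht
  have hpi := piC_ne_zero
  have hnum : HasDerivAt
      (fun u : ℝ => Complex.exp (Complex.I * k * ((Real.sqrt u : ℝ) : ℂ)) *
        (-Complex.I * k ^ 3 * ((Real.sqrt u : ℝ) : ℂ) ^ 3 + 6 * k ^ 2 * ((Real.sqrt u : ℝ) : ℂ) ^ 2
          + 15 * Complex.I * k * ((Real.sqrt u : ℝ) : ℂ) - 15))
      (Complex.exp (Complex.I * k * ((Real.sqrt t : ℝ) : ℂ)) *
          (Complex.I * k * ((1 / (2 * Real.sqrt t) : ℝ) : ℂ)) *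
          (-Complex.I * k ^ 3 * ((Real.sqrt t : ℝ) : ℂ) ^ 3
            + 6 * k ^ 2 * ((Real.sqrt t : ℝ) : ℂ) ^ 2
            + 15 * Complex.I * k * ((Real.sqrt t : ℝ) : ℂ) - 15)
        + Complex.exp (Complex.I * k * ((Real.sqrt t : ℝ) : ℂ)) *
          ((-Complex.I * k ^ 3) * (((1 / (2 * Real.sqrt t) : ℝ) : ℂ) * ((3 : ℂ) * ((Real.sqrt t : ℝ) : ℂ) ^ 2))
            + (6 * k ^ 2) * (((1 / (2 * Real.sqrt t) : ℝ) : ℂ) * ((2 : ℂ) * ((Real.sqrt t : ℝ) : ℂ) ^ 1))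
            + (15 * Complex.I * k) * ((1 / (2 * Real.sqrt t) : ℝ) : ℂ))) t :=
    ((hs.const_mul _).cexp).mul
      (((((hasDerivAt_sqrtC_pow 3 ht).const_mul (-Complex.I * k ^ 3)).add
          ((hasDerivAt_sqrtC_pow 2 ht).const_mul (6 * k ^ 2))).add
            (hs.const_mul (15 * Complex.I * k))).sub_const 15)
  have hden : HasDerivAt (fun u : ℝ => 32 * (Real.pi : ℂ) * ((Real.sqrt u : ℝ) : ℂ) ^ 7)
      ((32 * (Real.pi : ℂ)) * (((1 / (2 * Real.sqrt t) : ℝ) : ℂ) * ((7 : ℂ) * ((Real.sqrt t : ℝ) : ℂ) ^ 6))) t :=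
    (hasDerivAt_sqrtC_pow 7 ht).const_mul (32 * (Real.pi : ℂ))
  have hdne : 32 * (Real.pi : ℂ) * ((Real.sqrt t : ℝ) : ℂ) ^ 7 ≠ 0 := by
    simp [hsne, hpi]
  have := hnum.div hden hdne
  convert this using 1
  · rfl
  · rfl
  unfold P4
  have h2 : ((1 / (2 * Real.sqrt t) : ℝ) : ℂ) = 1 / (2 * ((Real.sqrt t : ℝ) : ℂ)) := by
    push_cast; ring
  rw [h2]
  field_simp
  ring_nf
  simp only [Complex.I_sq]
  ring

lemma sqC_eq (ht : 0 < t) : ((Real.sqrt t : ℝ) : ℂ) ^ 2 = (t : ℂ) := by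
  rw [← Complex.ofReal_pow, Real.sq_sqrt ht.le]

set_option maxHeartbeats 1000000 in
lemma PR0 (ht : 0 < t) : 4 * (t : ℂ) * P2 k t + 6 * P1 k t + k ^ 2 * P0 k t = 0 := by
  have hsne := sqrtC_ne_zero ht
  have hpi := piC_ne_zero
  have hsq := sqC_eq (t := t) ht
  unfold P0 P1 P2
  rw [← hsq]
  push_cast
  field_simp
  ring

set_option maxHeartbeats 1000000 in
lemma PR1 (ht : 0 < t) : 4 * (t : ℂ) * P3 k t + 10 * P2 k t + k ^ 2 * P1 k t = 0 := by
  have hsne := sqrtC_ne_zero ht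
  have hpi := piC_ne_zero
  have hsq := sqC_eq (t := t) ht
  unfold P1 P2 P3
  rw [← hsq]
  field_simp
  ring

set_option maxHeartbeats 1000000 in
lemma PR2 (ht : 0 < t) : 4 * (t : ℂ) * P4 k t + 14 * P3 k t + k ^ 2 * P2 k t = 0 := by
  have hsne := sqrtC_ne_zero ht
  have hpi := piC_ne_zero
  have hsq := sqC_eq (t := t) ht
  unfold P2 P3 P4
  rw [← hsq]
  field_simp
  ring


/-! ### Spatial calculus -/

variable {y : V3}

/-- squared distance -/
def q (y : V3) (z : V3) : ℝ := ∑ i, (z i - y i) ^ 2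

/-- coordinate difference, complex -/
def dd (y : V3) (a : Fin 3) (z : V3) : ℂ := ((z a - y a : ℝ) : ℂ)

lemma q_pos {z : V3} (h : z ≠ y) : 0 < q y z := by
  have h0 : z - y ≠ 0 := sub_ne_zero.2 h
  obtain ⟨a, ha⟩ : ∃ a, (z - y) a ≠ 0 := by
    by_contra hc
    push_neg at hc
    exact h0 (PiLp.ext hc)
  have ha' : (z a - y a) ≠ 0 := by
    simpa [PiLp.sub_apply] using ha
  have : (0:ℝ) < (z a - y a) ^ 2 := by positivity
  calc (0:ℝ) < (z a - y a) ^ 2 := this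
    _ ≤ q y z := Finset.single_le_sum (f := fun i => (z i - y i)^2)
        (fun i _ => by positivity) (Finset.mem_univ a)

lemma norm_sub_eq_sqrt_q (z : V3) : ‖z - y‖ = Real.sqrt (q y z) := by
  rw [EuclideanSpace.norm_eq]
  congr 1
  apply Finset.sum_congr rfl
  intro i _
  simp [PiLp.sub_apply, Real.norm_eq_abs, sq_abs]

lemma gammaK_eq (k : ℂ) (z : V3) : gammaK k z y = P0 k (q y z) := by
  unfold gammaK P0
  rw [norm_sub_eq_sqrt_q]

/-- `HasPD f p z`: `f` is differentiable at `z` with partials `p`. -/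
def HasPD (f : V3 → ℂ) (p : Fin 3 → ℂ) (z : V3) : Prop :=
  ∃ L : V3 →L[ℝ] ℂ, HasFDerivAt f L z ∧ ∀ m, L (EuclideanSpace.single m (1:ℝ)) = p m

lemma HasPD.pd_eq {f p z} (h : HasPD f p z) (m : Fin 3) : pd m f z = p m := by
  obtain ⟨L, hL, hp⟩ := h
  simp only [pd, hL.fderiv]
  exact hp m

lemma HasPD.congr_fun {f g p z} (h : HasPD f p z) (hfg : f =ᶠ[nhds z] g) : HasPD g p z := by
  obtain ⟨L, hL, hp⟩ := h
  exact ⟨L, hL.congr_of_eventuallyEq hfg.symm, hp⟩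

lemma HasPD.congr_p {f p p' z} (h : HasPD f p z) (hpp : ∀ m, p m = p' m) : HasPD f p' z := by
  obtain ⟨L, hL, hp⟩ := h
  exact ⟨L, hL, fun m => (hp m).trans (hpp m)⟩

lemma HasPD.add {f g p r z} (hf : HasPD f p z) (hg : HasPD g r z) :
    HasPD (fun w => f w + g w) (fun m => p m + r m) z := by
  obtain ⟨L, hL, hp⟩ := hf; obtain ⟨M, hM, hr⟩ := hg
  exact ⟨L + M, hL.add hM, fun m => by simp [hp m, hr m]⟩

lemma HasPD.sub {f g p r z} (hf : HasPD f p z) (hg : HasPD g r z) :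
    HasPD (fun w => f w - g w) (fun m => p m - r m) z := by
  obtain ⟨L, hL, hp⟩ := hf; obtain ⟨M, hM, hr⟩ := hg
  exact ⟨L - M, hL.sub hM, fun m => by simp [hp m, hr m]⟩

lemma HasPD.const_mul {f p z} (hf : HasPD f p z) (c : ℂ) :
    HasPD (fun w => c * f w) (fun m => c * p m) z := by
  obtain ⟨L, hL, hp⟩ := hf
  exact ⟨c • L, hL.const_mul c, fun m => by simp [hp m]⟩

lemma HasPD.mul {f g p r z} (hf : HasPD f p z) (hg : HasPD g r z) :
    HasPD (fun w => f w * g w) (fun m => p m * g z + f z * r m) z := by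
  obtain ⟨L, hL, hp⟩ := hf; obtain ⟨M, hM, hr⟩ := hg
  refine ⟨f z • M + g z • L, hL.mul hM, fun m => by simp [hp m, hr m]; ring⟩

lemma hasPD_const (c : ℂ) (z : V3) : HasPD (fun _ => c) (fun _ => 0) z :=
  ⟨0, hasFDerivAt_const c z, fun m => rfl⟩

lemma HasPD.sum {ι : Type*} (s : Finset ι) {f : ι → V3 → ℂ} {p : ι → Fin 3 → ℂ} {z}
    (h : ∀ i ∈ s, HasPD (f i) (p i) z) :
    HasPD (fun w => ∑ i ∈ s, f i w) (fun m => ∑ i ∈ s, p i m) z := by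
  classical
  choose L hL hp using h
  refine ⟨∑ i ∈ s.attach, L i.1 i.2, ?_, ?_⟩
  · have := HasFDerivAt.fun_sum (u := s.attach)
      (fun (i : {x // x ∈ s}) (_ : i ∈ s.attach) => hL i.1 i.2)
    refine this.congr_of_eventuallyEq (Filter.Eventually.of_forall fun w => ?_)
    beta_reduce
    rw [← Finset.sum_attach s (fun i => f i w)]
  · intro m
    simp only [ContinuousLinearMap.sum_apply]
    rw [← Finset.sum_attach s (fun i => p i m)]
    exact Finset.sum_congr rfl fun i _ => hp i.1 i.2 m

/-- partials of coordinate differences -/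
lemma hasPD_dd (a : Fin 3) (z : V3) :
    HasPD (dd y a) (fun m => if a = m then 1 else 0) z := by
  refine ⟨Complex.ofRealCLM.comp ((EuclideanSpace.proj a : V3 →L[ℝ] ℝ)), ?_, ?_⟩
  · have : HasFDerivAt (fun w : V3 => w a - y a)
        ((EuclideanSpace.proj a : V3 →L[ℝ] ℝ)) z :=
      ((EuclideanSpace.proj a : V3 →L[ℝ] ℝ)).hasFDerivAt.sub_const (y a)
    exact Complex.ofRealCLM.hasFDerivAt.comp z this
  · intro m
    simp [EuclideanSpace.single_apply, eq_comm]
    split <;> simp_all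

/-- partials of q -/
lemma hasFDerivAt_q (z : V3) :
    HasFDerivAt (q y) (∑ a, (2 * (z a - y a)) • (EuclideanSpace.proj a : V3 →L[ℝ] ℝ)) z := by
  have h : ∀ a : Fin 3, HasFDerivAt (fun w : V3 => (w a - y a) ^ 2)
      ((2 * (z a - y a)) • (EuclideanSpace.proj a : V3 →L[ℝ] ℝ)) z := by
    intro a
    have h1 : HasFDerivAt (fun w : V3 => w a - y a)
        ((EuclideanSpace.proj a : V3 →L[ℝ] ℝ)) z :=
      ((EuclideanSpace.proj a : V3 →L[ℝ] ℝ)).hasFDerivAt.sub_const (y a)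
    have := h1.fun_mul h1
    refine HasFDerivAt.congr_fderiv (by simpa only [sq] using this) ?_
    ext v; simp; ring
  exact HasFDerivAt.fun_sum (fun a _ => h a)

/-- partials of a radial function `F ∘ q` -/
lemma hasPD_comp_q {F : ℝ → ℂ} {g0 : ℂ} {z : V3} (hF : HasDerivAt F g0 (q y z)) :
    HasPD (fun w => F (q y w)) (fun m => 2 * dd y m z * g0) z := by
  refine ⟨(ContinuousLinearMap.smulRight (1 : ℝ →L[ℝ] ℝ) g0).comp
      (∑ a, (2 * (z a - y a)) • (EuclideanSpace.proj a : V3 →L[ℝ] ℝ)), ?_, ?_⟩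
  · exact hF.hasFDerivAt.comp z (hasFDerivAt_q (y := y) z)
  · intro m
    have key : (∑ a, (2 * (z a - y a)) • (EuclideanSpace.proj a : V3 →L[ℝ] ℝ))
        (EuclideanSpace.single m (1:ℝ)) = 2 * (z m - y m) := by
      simp only [ContinuousLinearMap.sum_apply, ContinuousLinearMap.smul_apply,
        PiLp.proj_apply, EuclideanSpace.single_apply, smul_eq_mul, mul_ite,
        mul_one, mul_zero]
      rw [Finset.sum_eq_single m (fun b _ hb => by simp [hb, Ne.symm hb]) (by simp)]
      simp
    simp only [ContinuousLinearMap.coe_comp', Function.comp_apply, key,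
      ContinuousLinearMap.smulRight_apply, ContinuousLinearMap.one_apply, dd]
    rw [Complex.real_smul]
    push_cast
    ring

/-! ### explicit derivative formulas -/

def del (a b : Fin 3) : ℂ := if a = b then 1 else 0

lemma del_comm (a b : Fin 3) : del a b = del b a := by
  simp [del, eq_comm]

def A0 (k : ℂ) (y : V3) : V3 → ℂ := fun z => P0 k (q y z)

def A1 (k : ℂ) (y : V3) (a : Fin 3) : V3 → ℂ := fun z => 2 * dd y a z * P1 k (q y z)

def A2 (k : ℂ) (y : V3) (a b : Fin 3) : V3 → ℂ := fun z =>
  4 * dd y a z * dd y b z * P2 k (q y z) + 2 * del b a * P1 k (q y z)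

def A3 (k : ℂ) (y : V3) (l a b : Fin 3) : V3 → ℂ := fun z =>
  8 * dd y a z * dd y b z * dd y l z * P3 k (q y z)
    + 4 * (del a l * dd y b z + del b l * dd y a z + del b a * dd y l z) * P2 k (q y z)

def A4 (k : ℂ) (y : V3) (m l a b : Fin 3) : V3 → ℂ := fun z =>
  16 * dd y a z * dd y b z * dd y l z * dd y m z * P4 k (q y z)
    + 8 * (del a m * dd y b z * dd y l z + del b m * dd y a z * dd y l z
        + del l m * dd y a z * dd y b z) * P3 k (q y z)
    + 8 * (del a l * dd y b z + del b l * dd y a z + del b a * dd y l z) * dd y m z * P3 k (q y z)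
    + 4 * (del a l * del b m + del b l * del a m + del b a * del l m) * P2 k (q y z)

def D3 (k : ℂ) (y : V3) (b : Fin 3) : V3 → ℂ := fun z =>
  8 * ((q y z : ℝ) : ℂ) * dd y b z * P3 k (q y z) + 20 * dd y b z * P2 k (q y z)

def WW (k : ℂ) (y : V3) (a b : Fin 3) : V3 → ℂ := fun z =>
  16 * ((q y z : ℝ) : ℂ) * dd y a z * dd y b z * P4 k (q y z)
    + 56 * dd y a z * dd y b z * P3 k (q y z)
    + del a b * (8 * ((q y z : ℝ) : ℂ) * P3 k (q y z) + 20 * P2 k (q y z))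

variable {k : ℂ} {z : V3}

lemma hasPD_A0 (hz : z ≠ y) : HasPD (A0 k y) (fun m => A1 k y m z) z := by
  have ht := q_pos hz
  exact (hasPD_comp_q (y := y) (hasDerivAt_P0 (k := k) ht)).congr_p (fun m => by
    simp only [A1])

lemma hasPD_A1 (hz : z ≠ y) (a : Fin 3) :
    HasPD (A1 k y a) (fun m => A2 k y m a z) z := by
  have ht := q_pos hz
  have h := ((hasPD_dd (y := y) a z).const_mul 2).mul
    (hasPD_comp_q (y := y) (hasDerivAt_P1 (k := k) ht))
  exact h.congr_p (fun m => by
    simp only [A2, del]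
    by_cases ha : a = m <;> simp [ha] <;> (try split_ifs) <;> ring)

lemma hasPD_A2 (hz : z ≠ y) (a b : Fin 3) :
    HasPD (A2 k y a b) (fun m => A3 k y m a b z) z := by
  have ht := q_pos hz
  have h1 := ((((hasPD_dd (y := y) a z).const_mul 4).mul (hasPD_dd (y := y) b z)).mul
    (hasPD_comp_q (y := y) (hasDerivAt_P2 (k := k) ht)))
  have h2 := (hasPD_comp_q (y := y) (hasDerivAt_P1 (k := k) ht)).const_mul (2 * del b a)
  exact (h1.add h2).congr_p (fun m => by
    simp only [A3, del]
    by_cases ha : a = m <;> by_cases hb : b = m <;> simp [ha, hb] <;> (try split_ifs) <;> ring)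

lemma hasPD_A3 (hz : z ≠ y) (l a b : Fin 3) :
    HasPD (A3 k y l a b) (fun m => A4 k y m l a b z) z := by
  have ht := q_pos hz
  have h1 := ((((hasPD_dd (y := y) a z).const_mul 8).mul (hasPD_dd (y := y) b z)).mul
    (hasPD_dd (y := y) l z)).mul (hasPD_comp_q (y := y) (hasDerivAt_P3 (k := k) ht))
  have h2 : HasPD (fun w => 4 * (del a l * dd y b w + del b l * dd y a w + del b a * dd y l w))
      (fun m => 4 * (del a l * (if b = m then (1:ℂ) else 0) + del b l * (if a = m then (1:ℂ) else 0)
        + del b a * (if l = m then (1:ℂ) else 0))) z := by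
    have := ((((hasPD_dd (y := y) b z).const_mul (del a l)).add
      ((hasPD_dd (y := y) a z).const_mul (del b l))).add
      ((hasPD_dd (y := y) l z).const_mul (del b a))).const_mul 4
    exact this.congr_p (fun m => by ring)
  have h3 := h2.mul (hasPD_comp_q (y := y) (hasDerivAt_P2 (k := k) ht))
  exact (h1.add h3).congr_p (fun m => by
    simp only [A4, del]
    by_cases ha : a = m <;> by_cases hb : b = m <;> by_cases hl : l = m <;>
      simp [ha, hb, hl] <;> (try split_ifs) <;> ring)

lemma hasPD_D3 (hz : z ≠ y) (b : Fin 3) :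
    HasPD (D3 k y b) (fun m => WW k y m b z) z := by
  have ht := q_pos hz
  have hQ3 : HasDerivAt (fun t : ℝ => ((t : ℝ) : ℂ) * P3 k t)
      (P3 k (q y z) + ((q y z : ℝ) : ℂ) * P4 k (q y z)) (q y z) := by
    have h1 : HasDerivAt (fun t : ℝ => ((t : ℝ) : ℂ)) 1 (q y z) := by
      simpa using (hasDerivAt_id (q y z)).ofReal_comp
    have := h1.mul (hasDerivAt_P3 (k := k) ht)
    convert this using 1
    · rfl
    · rfl
    ring
  have h1 : HasPD (fun w => (8 * dd y b w) * (((q y w : ℝ) : ℂ) * P3 k (q y w)))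
      (fun m => (8 * (if b = m then (1:ℂ) else 0)) * (((q y z : ℝ) : ℂ) * P3 k (q y z))
        + (8 * dd y b z) * (2 * dd y m z * (P3 k (q y z) + ((q y z : ℝ) : ℂ) * P4 k (q y z)))) z :=
    ((hasPD_dd (y := y) b z).const_mul 8).mul (hasPD_comp_q (y := y) hQ3)
  have h2 := ((hasPD_dd (y := y) b z).const_mul 20).mul (hasPD_comp_q (y := y) (hasDerivAt_P2 (k := k) ht))
  have hD3 : D3 k y b = fun w => (8 * dd y b w) * (((q y w : ℝ) : ℂ) * P3 k (q y w))
      + (20 * dd y b w) * P2 k (q y w) := by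
    funext w; simp only [D3]; ring
  rw [hD3]
  exact (h1.add h2).congr_p (fun m => by
    simp only [WW, del]
    by_cases hb : b = m
    · subst hb; simp only [if_pos rfl]; ring
    · simp only [if_neg hb]
      have : (if m = b then (1:ℂ) else 0) = 0 := if_neg (Ne.symm hb)
      rw [this]; ring)


lemma HasPD.mul_const {f : V3 → ℂ} {p : Fin 3 → ℂ} {z : V3} (hf : HasPD f p z) (c : ℂ) :
    HasPD (fun w => f w * c) (fun m => p m * c) z := by
  have h := hf.const_mul c
  have e : (fun w => c * f w) = fun w => f w * c := funext fun w => mul_comm _ _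
  rw [e] at h
  exact h.congr_p (fun m => mul_comm _ _)

lemma pd_congr {f g : V3 → ℂ} {z : V3} (h : f =ᶠ[nhds z] g) (m : Fin 3) :
    pd m f z = pd m g z := by
  unfold pd
  rw [h.fderiv_eq]

lemma qC : ((q y z : ℝ) : ℂ) = dd y 0 z ^ 2 + dd y 1 z ^ 2 + dd y 2 z ^ 2 := by
  simp only [q, dd, Fin.sum_univ_three]
  push_cast
  ring

lemma sum_A2 : ∑ m, A2 k y m m z
    = 4 * ((q y z : ℝ) : ℂ) * P2 k (q y z) + 6 * P1 k (q y z) := by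
  simp only [Fin.sum_univ_three, A2, del]
  rw [qC]
  simp
  ring

set_option maxHeartbeats 2000000 in
lemma sum_A4 (a b : Fin 3) : ∑ m, A4 k y m m a b z = WW k y a b z := by
  fin_cases a <;> fin_cases b <;>
    (simp only [Fin.sum_univ_three, A4, WW, del]; rw [qC]; simp; ring)

set_option maxHeartbeats 2000000 in
lemma sum_A3 (b : Fin 3) : ∑ l, A3 k y l l b z = D3 k y b z := by
  fin_cases b <;>
    (simp only [Fin.sum_univ_three, A3, D3, del]; rw [qC]; simp; ring)

end Kup


open Kup in
/-- Each column of the Kupradze tensor satisfies the time-harmonic Navier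
equation `μΔ_x E_j + (λ+μ)∇_x(∇_x·E_j) + ρω² E_j = 0` for `x ≠ y`. -/
theorem stmt_1 (μ lam ρ ω : ℝ) (hμ : 0 < μ) (hlam : 0 < lam + 2 * μ)
    (hρ : 0 < ρ) (hω : 0 < ω) (ks kp : ℂ)
    (hks : ks = ((ω * Real.sqrt (ρ / μ) : ℝ) : ℂ))
    (hkp : kp = ((ω * Real.sqrt (ρ / (lam + 2 * μ)) : ℝ) : ℂ))
    (y x : V3) (hxy : x ≠ y) (j i : Fin 3) :
    (μ : ℂ) * lap (fun z => kupE μ ρ ω ks kp i j z y) x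
      + ((lam : ℂ) + (μ : ℂ)) *
        pd i (fun z => ∑ l, pd l (fun w => kupE μ ρ ω ks kp l j w y) z) x
      + (ρ : ℂ) * (ω : ℂ) ^ 2 * kupE μ ρ ω ks kp i j x y = 0 := by
  classical
  have hμ0 : (μ:ℂ) ≠ 0 := by exact_mod_cast hμ.ne'
  have ht : 0 < q y x := q_pos hxy
  have r0s := PR0 (k := ks) ht
  have r1s := PR1 (k := ks) ht
  have r2s := PR2 (k := ks) ht
  have r1p := PR1 (k := kp) ht
  have r2p := PR2 (k := kp) ht
  have hks2 : (μ:ℂ) * ks^2 = (ρ:ℂ)*(ω:ℂ)^2 := by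
    have h3 : μ * (ω * Real.sqrt (ρ/μ))^2 = ρ * ω^2 := by
      rw [mul_pow, Real.sq_sqrt (by positivity : (0:ℝ) ≤ ρ/μ)]
      field_simp
    calc (μ:ℂ) * ks^2 = ((μ * (ω*Real.sqrt (ρ/μ))^2 : ℝ) : ℂ) := by
          rw [hks]; push_cast; ring
      _ = ((ρ*ω^2 : ℝ):ℂ) := by rw [h3]
      _ = (ρ:ℂ)*(ω:ℂ)^2 := by push_cast; ring
  have hkp2 : ((lam:ℂ)+2*(μ:ℂ)) * kp^2 = (ρ:ℂ)*(ω:ℂ)^2 := by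
    have h3 : (lam + 2*μ) * (ω * Real.sqrt (ρ/(lam+2*μ)))^2 = ρ * ω^2 := by
      rw [mul_pow, Real.sq_sqrt (by positivity : (0:ℝ) ≤ ρ/(lam+2*μ))]
      field_simp
    calc ((lam:ℂ)+2*(μ:ℂ)) * kp^2
        = (((lam + 2*μ) * (ω*Real.sqrt (ρ/(lam+2*μ)))^2 : ℝ) : ℂ) := by
          rw [hkp]; push_cast; ring
      _ = ((ρ*ω^2 : ℝ):ℂ) := by rw [h3]
      _ = (ρ:ℂ)*(ω:ℂ)^2 := by push_cast; ring
  have hg : (fun w => gammaK ks w y - gammaK kp w y) = fun w => A0 ks y w - A0 kp y w := by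
    funext w
    simp only [A0]
    rw [gammaK_eq, gammaK_eq]
  have hpdj : ∀ z, z ≠ y → pd j (fun w => gammaK ks w y - gammaK kp w y) z
      = A1 ks y j z - A1 kp y j z := by
    intro z hz
    rw [hg]
    exact ((hasPD_A0 (k := ks) hz).sub (hasPD_A0 (k := kp) hz)).pd_eq j
  have hpdij : ∀ (a : Fin 3) (z : V3), z ≠ y →
      pd a (pd j (fun w => gammaK ks w y - gammaK kp w y)) z
      = A2 ks y a j z - A2 kp y a j z := by
    intro a z hz
    have hev : pd j (fun w => gammaK ks w y - gammaK kp w y)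
        =ᶠ[nhds z] fun w => A1 ks y j w - A1 kp y j w := by
      filter_upwards [eventually_ne_nhds hz] with w hw
      exact hpdj w hw
    rw [pd_congr hev a]
    exact ((hasPD_A1 (k := ks) hz j).sub (hasPD_A1 (k := kp) hz j)).pd_eq a
  have hkup : ∀ (a : Fin 3) (z : V3), z ≠ y → kupE μ ρ ω ks kp a j z y
      = 1/(μ:ℂ) * A0 ks y z * (if a = j then 1 else 0)
        + 1/((ρ:ℂ)*(ω:ℂ)^2) * (A2 ks y a j z - A2 kp y a j z) := by
    intro a z hz
    unfold kupE
    rw [hpdij a z hz]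
    simp only [A0]
    rw [gammaK_eq]
  have hpdm : ∀ (a m : Fin 3) (z : V3), z ≠ y →
      pd m (fun w => kupE μ ρ ω ks kp a j w y) z
      = 1/(μ:ℂ) * A1 ks y m z * (if a = j then 1 else 0)
        + 1/((ρ:ℂ)*(ω:ℂ)^2) * (A3 ks y m a j z - A3 kp y m a j z) := by
    intro a m z hz
    have hev : (fun w => kupE μ ρ ω ks kp a j w y) =ᶠ[nhds z]
        (fun w => 1/(μ:ℂ) * A0 ks y w * (if a = j then 1 else 0)
          + 1/((ρ:ℂ)*(ω:ℂ)^2) * (A2 ks y a j w - A2 kp y a j w)) := by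
      filter_upwards [eventually_ne_nhds hz] with w hw
      exact hkup a w hw
    rw [pd_congr hev m]
    have h1 := ((hasPD_A0 (k := ks) hz).const_mul (1/(μ:ℂ))).mul_const
      (if a = j then (1:ℂ) else 0)
    have h2 := ((hasPD_A2 (k := ks) hz a j).sub (hasPD_A2 (k := kp) hz a j)).const_mul (1/((ρ:ℂ)*(ω:ℂ)^2))
    exact (h1.add h2).pd_eq m
  have hlap : lap (fun z => kupE μ ρ ω ks kp i j z y) x
      = 1/(μ:ℂ) * (4 * ((q y x : ℝ):ℂ) * P2 ks (q y x) + 6 * P1 ks (q y x))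
          * (if i = j then 1 else 0)
        + 1/((ρ:ℂ)*(ω:ℂ)^2) * (WW ks y i j x - WW kp y i j x) := by
    unfold lap
    have hstep : ∀ m : Fin 3, pd m (pd m (fun z => kupE μ ρ ω ks kp i j z y)) x
        = 1/(μ:ℂ) * A2 ks y m m x * (if i = j then 1 else 0)
          + 1/((ρ:ℂ)*(ω:ℂ)^2) * (A4 ks y m m i j x - A4 kp y m m i j x) := by
      intro m
      have hev : pd m (fun z => kupE μ ρ ω ks kp i j z y) =ᶠ[nhds x]
          (fun w => 1/(μ:ℂ) * A1 ks y m w * (if i = j then 1 else 0)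
            + 1/((ρ:ℂ)*(ω:ℂ)^2) * (A3 ks y m i j w - A3 kp y m i j w)) := by
        filter_upwards [eventually_ne_nhds hxy] with w hw
        exact hpdm i m w hw
      rw [pd_congr hev m]
      have h1 := ((hasPD_A1 (k := ks) hxy m).const_mul (1/(μ:ℂ))).mul_const
        (if i = j then (1:ℂ) else 0)
      have h2 := ((hasPD_A3 (k := ks) hxy m i j).sub (hasPD_A3 (k := kp) hxy m i j)).const_mul
        (1/((ρ:ℂ)*(ω:ℂ)^2))
      exact (h1.add h2).pd_eq m
    rw [Finset.sum_congr rfl (fun m _ => hstep m)]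
    rw [Fin.sum_univ_three]
    have e2 := sum_A2 (k := ks) (y := y) (z := x)
    have e4s := sum_A4 (k := ks) (y := y) (z := x) i j
    have e4p := sum_A4 (k := kp) (y := y) (z := x) i j
    rw [Fin.sum_univ_three] at e2 e4s e4p
    linear_combination e2 * (1/(μ:ℂ)) * (if i = j then (1:ℂ) else 0)
      + (e4s - e4p) * (1/((ρ:ℂ)*(ω:ℂ)^2))
  have hdivsum : ∀ z : V3, z ≠ y → (∑ l, pd l (fun w => kupE μ ρ ω ks kp l j w y) z)
      = 1/(μ:ℂ) * A1 ks y j z + 1/((ρ:ℂ)*(ω:ℂ)^2) * (D3 ks y j z - D3 kp y j z) := by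
    intro z hz
    rw [Finset.sum_congr rfl (fun l _ => hpdm l l z hz), Finset.sum_add_distrib]
    have hA : (∑ l, 1/(μ:ℂ) * A1 ks y l z * (if l = j then (1:ℂ) else 0))
        = 1/(μ:ℂ) * A1 ks y j z := by
      rw [Finset.sum_congr rfl (fun l _ =>
        show 1/(μ:ℂ) * A1 ks y l z * (if l = j then (1:ℂ) else 0)
          = (if l = j then (1/(μ:ℂ) * A1 ks y l z) else 0) from by
            split_ifs <;> ring)]
      simp
    have hB : (∑ l, 1/((ρ:ℂ)*(ω:ℂ)^2) * (A3 ks y l l j z - A3 kp y l l j z))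
        = 1/((ρ:ℂ)*(ω:ℂ)^2) * (D3 ks y j z - D3 kp y j z) := by
      rw [← Finset.mul_sum, Finset.sum_sub_distrib, sum_A3, sum_A3]
    rw [hA, hB]
  have hdiv : pd i (fun z => ∑ l, pd l (fun w => kupE μ ρ ω ks kp l j w y) z) x
      = 1/(μ:ℂ) * A2 ks y i j x + 1/((ρ:ℂ)*(ω:ℂ)^2) * (WW ks y i j x - WW kp y i j x) := by
    have hev : (fun z => ∑ l, pd l (fun w => kupE μ ρ ω ks kp l j w y) z) =ᶠ[nhds x]
        (fun z => 1/(μ:ℂ) * A1 ks y j z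
          + 1/((ρ:ℂ)*(ω:ℂ)^2) * (D3 ks y j z - D3 kp y j z)) := by
      filter_upwards [eventually_ne_nhds hxy] with w hw
      exact hdivsum w hw
    rw [pd_congr hev i]
    have h1 := (hasPD_A1 (k := ks) hxy j).const_mul (1/(μ:ℂ))
    have h2 := ((hasPD_D3 (k := ks) hxy j).sub (hasPD_D3 (k := kp) hxy j)).const_mul (1/((ρ:ℂ)*(ω:ℂ)^2))
    exact (h1.add h2).pd_eq i
  rw [hlap, hdiv, hkup i x hxy]
  have hR0 : ((ρ:ℂ)*(ω:ℂ)^2) ≠ 0 := by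
    have h1 : (ρ * ω^2 : ℝ) ≠ 0 := by positivity
    have h2 : ((ρ * ω^2 : ℝ) : ℂ) ≠ 0 := by exact_mod_cast h1
    simpa using h2
  have hμinv : (μ:ℂ) * (1/(μ:ℂ)) = 1 := mul_one_div_cancel hμ0
  have hRinv : ((ρ:ℂ)*(ω:ℂ)^2) * (1/((ρ:ℂ)*(ω:ℂ)^2)) = 1 := mul_one_div_cancel hR0
  simp only [A0, A1, A2, WW, del]
  by_cases hij : i = j
  · subst hij
    simp only [eq_self_iff_true, if_true]
    linear_combination r0s
      + ((lam:ℂ)+2*(μ:ℂ)) * (1/((ρ:ℂ)*(ω:ℂ)^2)) *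
          (4*(dd y i x*dd y i x)*(r2s - r2p) + 2*(r1s - r1p))
      + ((4*((q y x:ℝ):ℂ)*P2 ks (q y x) + 6*P1 ks (q y x) + ks^2*P0 ks (q y x))
          - (4*(dd y i x*dd y i x)*P2 ks (q y x) + 2*P1 ks (q y x))
          + ((lam:ℂ)+2*(μ:ℂ))*(1/((ρ:ℂ)*(ω:ℂ)^2))*ks^2
            *(4*(dd y i x*dd y i x)*P2 ks (q y x) + 2*P1 ks (q y x))) * hμinv
      + ((1 - ((lam:ℂ)+2*(μ:ℂ))*(1/(μ:ℂ)))
          *(4*(dd y i x*dd y i x)*P2 ks (q y x) + 2*P1 ks (q y x))) * hRinv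
      + (-(((lam:ℂ)+2*(μ:ℂ))*(1/(μ:ℂ))*(1/((ρ:ℂ)*(ω:ℂ)^2))
            *(4*(dd y i x*dd y i x)*P2 ks (q y x) + 2*P1 ks (q y x)))
          - P0 ks (q y x)*(1/(μ:ℂ))) * hks2
      + ((1/((ρ:ℂ)*(ω:ℂ)^2))
          *(4*(dd y i x*dd y i x)*P2 kp (q y x) + 2*P1 kp (q y x))) * hkp2
  · simp only [if_neg hij, if_neg (Ne.symm hij)]
    linear_combination ((lam:ℂ)+2*(μ:ℂ)) * (1/((ρ:ℂ)*(ω:ℂ)^2)) *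
          (4*(dd y i x*dd y j x)*(r2s - r2p))
      + (-(4*(dd y i x*dd y j x)*P2 ks (q y x))
          + ((lam:ℂ)+2*(μ:ℂ))*(1/((ρ:ℂ)*(ω:ℂ)^2))*ks^2
            *(4*(dd y i x*dd y j x)*P2 ks (q y x))) * hμinv
      + ((1 - ((lam:ℂ)+2*(μ:ℂ))*(1/(μ:ℂ)))*(4*(dd y i x*dd y j x)*P2 ks (q y x))) * hRinv
      + (-(((lam:ℂ)+2*(μ:ℂ))*(1/(μ:ℂ))*(1/((ρ:ℂ)*(ω:ℂ)^2))
            *(4*(dd y i x*dd y j x)*P2 ks (q y x)))) * hks2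
      + ((1/((ρ:ℂ)*(ω:ℂ)^2))*(4*(dd y i x*dd y j x)*P2 kp (q y x))) * hkp2
end
end

section
/- Let λ, μ ∈ ℝ, let f : ℝ³ → ℂ be twice continuously differentiable and let ν ∈ ℝ³ be a constant vector. Then T(∂,ν)(∇f) = (λ+2μ) ν Δf + 2μ M(∂,ν)(∇f) pointwise on ℝ³. -/
noncomputable section

open scoped BigOperators

lemma pd_pd_comm (f : V3 → ℂ) (hf : ContDiff ℝ 2 f) (i j : Fin 3) (x : V3) :
    pd i (pd j f) x = pd j (pd i f) x := by
  have hfd : ContDiff ℝ 1 (fderiv ℝ f) :=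
    hf.fderiv_right (by norm_num)
  have hdiff : Differentiable ℝ (fderiv ℝ f) := hfd.differentiable one_ne_zero
  have hrw : ∀ (a b : Fin 3),
      pd a (pd b f) x = (fderiv ℝ (fderiv ℝ f) x (EuclideanSpace.single a (1:ℝ)))
        (EuclideanSpace.single b (1:ℝ)) := by
    intro a b
    have : pd b f = fun y => fderiv ℝ f y (EuclideanSpace.single b (1:ℝ)) := rfl
    rw [pd, this]
    have h := fderiv_clm_apply (x := x) (hdiff.differentiableAt)
      (differentiableAt_const (EuclideanSpace.single b (1:ℝ)))
    simp [h]
  rw [hrw, hrw]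
  have hsymm := second_derivative_symmetric
    (f' := fderiv ℝ f) (f'' := fderiv ℝ (fderiv ℝ f) x)
    (fun y => (hf.differentiable (by norm_num) y).hasFDerivAt)
    (hdiff x).hasFDerivAt
  exact hsymm _ _

/-- For `f` twice continuously differentiable and a constant vector `ν`,
`T(∂,ν)(∇f) = (λ+2μ) ν Δf + 2μ M(∂,ν)(∇f)` pointwise (componentwise). -/
theorem stmt_3 (lam μ : ℝ) (f : V3 → ℂ) (hf : ContDiff ℝ 2 f)
    (ν : Fin 3 → ℝ) (x : V3) (i : Fin 3) :
    traction lam μ ν (fun j => pd j f) i x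
      = ((lam : ℂ) + 2 * (μ : ℂ)) * (ν i : ℂ) * lap f x
        + 2 * (μ : ℂ) * gunterM ν (fun j => pd j f) i x := by
  have hc : ∀ a b : Fin 3, pd a (pd b f) x = pd b (pd a f) x :=
    fun a b => pd_pd_comm f hf a b x
  have hcurl : ∀ m : Fin 3, curl (fun j => pd j f) m x = 0 := by
    intro m
    fin_cases m <;>
      · simp only [curl, Fin.sum_univ_three]
        norm_num [eps, Fin.ext_iff, Prod.ext_iff]
        first
        | rw [hc 1 2]; ring
        | rw [hc 0 2]; ring
        | rw [hc 0 1]; ring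
  have hcross : crossR ν (fun m => curl (fun j => pd j f) m x) i = 0 := by
    simp [crossR, hcurl]
  simp only [traction, hcross, dirD, vdiv, gunterM, lap, Fin.sum_univ_three]
  rw [hc 0 i, hc 1 i, hc 2 i]
  ring
end
end

section
/- For every x ≠ y in ℝ³ and every constant vector ν ∈ ℝ³, the traction of the Kupradze tensor in the variable x satisfies T(∂_x,ν)E(x,y) = −ν (∇_x[γ_{k_s}(x,y)−γ_{k_p}(x,y)])^⊤ + (ν·∇_x γ_{k_s}(x,y)) I + M(∂_x,ν)[2μ E(x,y) − γ_{k_s}(x,y) I], where I is the 3×3 identity matrix. -/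
noncomputable section

open scoped BigOperators

namespace Aux

def Gc (k : ℂ) (t : ℝ) : ℂ := Complex.exp (Complex.I * k * t) / ((4 * Real.pi * t : ℝ) : ℂ)
def Hc (k : ℂ) (t : ℝ) : ℂ :=
  Complex.exp (Complex.I * k * t) * (Complex.I * k * t - 1) / ((4 * Real.pi * t ^ 3 : ℝ) : ℂ)
def Kc (k : ℂ) (t : ℝ) : ℂ :=
  Complex.exp (Complex.I * k * t) * (-k ^ 2 * t ^ 2 - 3 * (Complex.I * k * t) + 3) /
    ((4 * Real.pi * t ^ 5 : ℝ) : ℂ)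

lemma hasDerivAt_coe (t : ℝ) : HasDerivAt (fun s : ℝ => (s : ℂ)) 1 t := by
  exact (hasDerivAt_id t).ofReal_comp

lemma hasDerivAt_num (k : ℂ) (t : ℝ) :
    HasDerivAt (fun s : ℝ => Complex.exp (Complex.I * k * s))
      (Complex.I * k * Complex.exp (Complex.I * k * t)) t := by
  have h1 : HasDerivAt (fun s : ℝ => Complex.I * k * (s : ℂ)) (Complex.I * k) t := by
    simpa using (hasDerivAt_coe t).const_mul (Complex.I * k)
  simpa [mul_comm] using h1.cexp

lemma den_ne {c t : ℝ} (hc : c ≠ 0) (ht : t ≠ 0) (n : ℕ) : ((4 * c * t ^ n : ℝ) : ℂ) ≠ 0 := by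
  simp [hc, ht]

lemma hasDerivAt_den (c : ℝ) (n : ℕ) (hn : n ≠ 0) (t : ℝ) :
    HasDerivAt (fun s : ℝ => ((4 * c * s ^ n : ℝ) : ℂ)) ((4 * c * n * t ^ (n - 1) : ℝ) : ℂ) t := by
  have h1 : HasDerivAt (fun s : ℝ => (4 * c * s ^ n : ℝ)) (4 * c * n * t ^ (n - 1)) t := by
    have := (hasDerivAt_pow n t).const_mul (4 * c)
    simpa [mul_comm, mul_assoc, mul_left_comm] using this
  have := Complex.ofRealCLM.hasFDerivAt.comp_hasDerivAt t h1
  simpa [Function.comp_def] using this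

lemma hasDerivAt_Gc (k : ℂ) {t : ℝ} (ht : t ≠ 0) : HasDerivAt (Gc k) ((t : ℂ) * Hc k t) t := by
  have hden : HasDerivAt (fun s : ℝ => ((4 * Real.pi * s : ℝ) : ℂ)) ((4 * Real.pi : ℝ) : ℂ) t := by
    have h1 : HasDerivAt (fun s : ℝ => ((4 * Real.pi : ℝ) : ℂ) * (s : ℂ)) ((4 * Real.pi : ℝ) : ℂ) t := by
      simpa using (hasDerivAt_coe t).const_mul ((4 * Real.pi : ℝ) : ℂ)
    have : (fun s : ℝ => ((4 * Real.pi * s : ℝ) : ℂ)) = fun s : ℝ => ((4 * Real.pi : ℝ) : ℂ) * (s : ℂ) := by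
      funext s; push_cast; ring
    rw [this]; exact h1
  have hden0 : ((4 * Real.pi * t : ℝ) : ℂ) ≠ 0 := by simp [Real.pi_ne_zero, ht]
  have h := (hasDerivAt_num k t).div hden hden0
  refine h.congr_deriv ?_
  symm
  have hπ : (Real.pi : ℂ) ≠ 0 := by exact_mod_cast Real.pi_ne_zero
  have ht' : (t : ℂ) ≠ 0 := by exact_mod_cast ht
  unfold Hc
  push_cast
  field_simp

lemma hasDerivAt_Hc (k : ℂ) {t : ℝ} (ht : t ≠ 0) : HasDerivAt (Hc k) ((t : ℂ) * Kc k t) t := by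
  have hnum : HasDerivAt
      (fun s : ℝ => Complex.exp (Complex.I * k * s) * (Complex.I * k * s - 1))
      (Complex.I * k * Complex.exp (Complex.I * k * t) * (Complex.I * k * t - 1)
        + Complex.exp (Complex.I * k * t) * (Complex.I * k)) t := by
    have h2 : HasDerivAt (fun s : ℝ => Complex.I * k * (s : ℂ) - 1) (Complex.I * k) t := by
      simpa using ((hasDerivAt_coe t).const_mul (Complex.I * k)).sub_const 1
    exact (hasDerivAt_num k t).mul h2
  have hd := hasDerivAt_den Real.pi 3 (by norm_num) t
  have h := hnum.div hd (den_ne Real.pi_ne_zero ht 3)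
  have hHc : Hc k = fun s : ℝ =>
      Complex.exp (Complex.I * k * s) * (Complex.I * k * s - 1) / ((4 * Real.pi * s ^ 3 : ℝ) : ℂ) := rfl
  rw [hHc]
  refine h.congr_deriv ?_
  symm
  have hπ : (Real.pi : ℂ) ≠ 0 := by exact_mod_cast Real.pi_ne_zero
  have ht' : (t : ℂ) ≠ 0 := by exact_mod_cast ht
  unfold Kc
  push_cast
  field_simp
  ring_nf
  simp only [Complex.I_sq]
  ring

lemma helm_scalar (k : ℂ) {t : ℝ} (ht : t ≠ 0) :
    ((t : ℂ)) ^ 2 * Kc k t + 3 * Hc k t = -k ^ 2 * Gc k t := by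
  have hπ : (Real.pi : ℂ) ≠ 0 := by exact_mod_cast Real.pi_ne_zero
  have ht' : (t : ℂ) ≠ 0 := by exact_mod_cast ht
  unfold Kc Hc Gc
  push_cast
  field_simp
  ring


variable {k : ℂ} {y z : V3}

lemma nrm_ne (hz : z ≠ y) : ‖z - y‖ ≠ 0 := norm_ne_zero_iff.2 (sub_ne_zero.2 hz)

lemma hasFDerivAt_nrm (hz : z ≠ y) :
    HasFDerivAt (fun w : V3 => ‖w - y‖) ((‖z - y‖)⁻¹ • (innerSL ℝ (z - y))) z := by
  have h0 : z - y ≠ 0 := sub_ne_zero.2 hz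
  have hsq : HasFDerivAt (fun w : V3 => ‖w - y‖ ^ 2)
      (2 • (innerSL ℝ (z - y)).comp (ContinuousLinearMap.id ℝ V3)) z :=
    HasFDerivAt.norm_sq (hasFDerivAt_id z |>.sub_const y)
  have hs : HasDerivAt Real.sqrt (1 / (2 * Real.sqrt (‖z - y‖ ^ 2))) (‖z - y‖ ^ 2) :=
    Real.hasDerivAt_sqrt (pow_ne_zero 2 (norm_ne_zero_iff.2 h0))
  have h := hs.comp_hasFDerivAt z hsq
  have heq : (fun w : V3 => ‖w - y‖) = Real.sqrt ∘ (fun w : V3 => ‖w - y‖ ^ 2) := by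
    funext w; simp [Real.sqrt_sq (norm_nonneg _)]
  rw [heq]
  refine h.congr_fderiv ?_
  symm
  ext v
  simp [Real.sqrt_sq (norm_nonneg _), ContinuousLinearMap.smul_apply]
  field_simp

lemma hasFDerivAt_gam (hz : z ≠ y) :
    HasFDerivAt (fun w => gammaK k w y)
      ((ContinuousLinearMap.smulRight (1 : ℝ →L[ℝ] ℝ) ((‖z - y‖ : ℂ) * Hc k ‖z - y‖)).comp
        ((‖z - y‖)⁻¹ • (innerSL ℝ (z - y)))) z := by
  have h := ((hasDerivAt_Gc k (nrm_ne hz)).hasFDerivAt).comp z (hasFDerivAt_nrm hz)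
  exact h

lemma pd_gam (hz : z ≠ y) (i : Fin 3) :
    pd i (fun w => gammaK k w y) z = (((z - y) i : ℝ) : ℂ) * Hc k ‖z - y‖ := by
  rw [pd, (hasFDerivAt_gam hz).fderiv]
  have h2 : ((innerSL ℝ (z - y)) (EuclideanSpace.single i (1 : ℝ))) = (z - y) i := by
    simp [EuclideanSpace.inner_single_right]
  have hn' : ((‖z - y‖ : ℝ) : ℂ) ≠ 0 := by exact_mod_cast nrm_ne hz
  simp [ContinuousLinearMap.smul_apply, h2, smul_eq_mul, EuclideanSpace.inner_single_right]
  field_simp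

lemma hasFDerivAt_HF (hz : z ≠ y) :
    HasFDerivAt (fun w : V3 => Hc k ‖w - y‖)
      ((ContinuousLinearMap.smulRight (1 : ℝ →L[ℝ] ℝ) ((‖z - y‖ : ℂ) * Kc k ‖z - y‖)).comp
        ((‖z - y‖)⁻¹ • (innerSL ℝ (z - y)))) z := by
  exact ((hasDerivAt_Hc k (nrm_ne hz)).hasFDerivAt).comp z (hasFDerivAt_nrm hz)

lemma hasFDerivAt_coord (l : Fin 3) :
    HasFDerivAt (fun w : V3 => (((w - y) l : ℝ) : ℂ))
      (Complex.ofRealCLM.comp ((EuclideanSpace.proj l).comp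
        (ContinuousLinearMap.id ℝ V3))) z := by
  have h0 : HasFDerivAt (fun w : V3 => w - y) (ContinuousLinearMap.id ℝ V3) z :=
    (hasFDerivAt_id z).sub_const y
  have h1 := ((EuclideanSpace.proj l (𝕜 := ℝ)).hasFDerivAt).comp z h0
  have h2 := (Complex.ofRealCLM.hasFDerivAt).comp z h1
  exact h2

lemma pd_pd_gam_diag (hz : z ≠ y) (l : Fin 3) :
    pd l (pd l (fun w => gammaK k w y)) z
      = (((z - y) l : ℝ) : ℂ) ^ 2 * Kc k ‖z - y‖ + Hc k ‖z - y‖ := by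
  have hev : pd l (fun w => gammaK k w y)
      =ᶠ[nhds z] fun w => (((w - y) l : ℝ) : ℂ) * Hc k ‖w - y‖ := by
    filter_upwards [eventually_ne_nhds hz] with w hw
    exact pd_gam hw l
  have hprod := (hasFDerivAt_coord (y := y) (z := z) l).fun_mul (hasFDerivAt_HF (k := k) hz)
  rw [show pd l (pd l (fun w => gammaK k w y)) z
      = fderiv ℝ (pd l (fun w => gammaK k w y)) z (EuclideanSpace.single l (1 : ℝ)) from rfl,
    hev.fderiv_eq, hprod.fderiv]
  have h2 : ((innerSL ℝ (z - y)) (EuclideanSpace.single l (1 : ℝ))) = (z - y) l := by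
    simp [EuclideanSpace.inner_single_right]
  have hn' : ((‖z - y‖ : ℝ) : ℂ) ≠ 0 := by exact_mod_cast nrm_ne hz
  simp [ContinuousLinearMap.smul_apply, h2, smul_eq_mul, EuclideanSpace.inner_single_right]
  field_simp

lemma sum_coord_sq (v : V3) : ∑ l, (v l : ℝ) ^ 2 = ‖v‖ ^ 2 := by
  rw [EuclideanSpace.norm_eq, Real.sq_sqrt (by positivity)]
  simp [Real.norm_eq_abs, sq_abs]

lemma helmholtz (hz : z ≠ y) :
    ∑ l, pd l (pd l (fun w => gammaK k w y)) z = -k ^ 2 * gammaK k z y := by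
  have h1 : ∑ l, pd l (pd l (fun w => gammaK k w y)) z
      = (∑ l : Fin 3, (((z - y) l : ℝ) : ℂ) ^ 2) * Kc k ‖z - y‖ + 3 * Hc k ‖z - y‖ := by
    rw [Finset.sum_congr rfl fun l _ => pd_pd_gam_diag hz l]
    rw [Finset.sum_add_distrib, ← Finset.sum_mul]
    simp [Fin.sum_univ_three]
  have h2 : (∑ l : Fin 3, (((z - y) l : ℝ) : ℂ) ^ 2) = ((‖z - y‖ : ℝ) : ℂ) ^ 2 := by
    rw [show (∑ l : Fin 3, (((z - y) l : ℝ) : ℂ) ^ 2) = ((∑ l, ((z - y) l : ℝ) ^ 2 : ℝ) : ℂ) by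
      push_cast; rfl]
    rw [sum_coord_sq]
    push_cast; rfl
  rw [h1, h2]
  have h3 : gammaK k z y = Gc k ‖z - y‖ := rfl
  rw [h3]
  exact helm_scalar k (nrm_ne hz)

lemma contDiffAt_gam (hz : z ≠ y) : ContDiffAt ℝ (⊤ : ℕ∞) (fun w => gammaK k w y) z := by
  have hn : ContDiffAt ℝ (⊤ : ℕ∞) (fun w : V3 => ‖w - y‖) z := by
    have : ContDiffAt ℝ (⊤ : ℕ∞) (fun w : V3 => w - y) z :=
      (contDiff_id.sub contDiff_const).contDiffAt
    exact this.norm ℝ (sub_ne_zero.2 hz)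
  have hcast : ContDiffAt ℝ (⊤ : ℕ∞) (fun w : V3 => ((‖w - y‖ : ℝ) : ℂ)) z :=
    Complex.ofRealCLM.contDiff.contDiffAt.comp z hn
  have hnum : ContDiffAt ℝ (⊤ : ℕ∞) (fun w : V3 => Complex.exp (Complex.I * k * (‖w - y‖ : ℂ))) z := by
    have h1 : ContDiffAt ℝ (⊤ : ℕ∞) (fun w : V3 => Complex.I * k * ((‖w - y‖ : ℝ) : ℂ)) z :=
      contDiffAt_const.mul hcast
    exact h1.cexp
  have hden : ContDiffAt ℝ (⊤ : ℕ∞) (fun w : V3 => ((4 * Real.pi * ‖w - y‖ : ℝ) : ℂ)) z := by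
    have h1 : ContDiffAt ℝ (⊤ : ℕ∞) (fun w : V3 => (4 * Real.pi * ‖w - y‖ : ℝ)) z :=
      contDiffAt_const.mul hn
    exact Complex.ofRealCLM.contDiff.contDiffAt.comp z h1
  have hden0 : ((4 * Real.pi * ‖z - y‖ : ℝ) : ℂ) ≠ 0 := by
    simp [Real.pi_ne_zero, nrm_ne hz]
  have := hnum.mul (hden.inv hden0)
  refine this.congr_of_eventuallyEq ?_
  filter_upwards with w
  rw [gammaK, div_eq_mul_inv]
  rfl

lemma contDiffAt_pd {f : V3 → ℂ} (hf : ContDiffAt ℝ (⊤ : ℕ∞) f z) (i : Fin 3) :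
    ContDiffAt ℝ (⊤ : ℕ∞) (pd i f) z := by
  have h1 : ContDiffAt ℝ (⊤ : ℕ∞) (fderiv ℝ f) z :=
    hf.fderiv_right (by exact_mod_cast le_top)
  exact h1.clm_apply contDiffAt_const

lemma diffAt {f : V3 → ℂ} (hf : ContDiffAt ℝ (⊤ : ℕ∞) f z) : DifferentiableAt ℝ f z :=
  hf.differentiableAt (by simp)

lemma pd_congr {f g : V3 → ℂ} (h : f =ᶠ[nhds z] g) (i : Fin 3) : pd i f z = pd i g z := by
  rw [pd, pd, h.fderiv_eq]

lemma pd_add {f g : V3 → ℂ} (hf : DifferentiableAt ℝ f z) (hg : DifferentiableAt ℝ g z)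
    (i : Fin 3) : pd i (fun w => f w + g w) z = pd i f z + pd i g z := by
  simp only [pd, fderiv_fun_add hf hg]; rfl

lemma pd_sub {f g : V3 → ℂ} (hf : DifferentiableAt ℝ f z) (hg : DifferentiableAt ℝ g z)
    (i : Fin 3) : pd i (fun w => f w - g w) z = pd i f z - pd i g z := by
  simp only [pd, fderiv_fun_sub hf hg]; rfl

lemma pd_const_mul {f : V3 → ℂ} (hf : DifferentiableAt ℝ f z) (c : ℂ)
    (i : Fin 3) : pd i (fun w => c * f w) z = c * pd i f z := by
  simp only [pd, fderiv_const_mul hf c]; rfl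

lemma pd_mul_const {f : V3 → ℂ} (hf : DifferentiableAt ℝ f z) (c : ℂ)
    (i : Fin 3) : pd i (fun w => f w * c) z = pd i f z * c := by
  simp only [pd, fderiv_mul_const hf c]
  simp [mul_comm]

lemma pd_sum {F : Fin 3 → V3 → ℂ} (hf : ∀ l, DifferentiableAt ℝ (F l) z)
    (i : Fin 3) : pd i (fun w => ∑ l, F l w) z = ∑ l, pd i (F l) z := by
  simp only [pd, fderiv_fun_sum fun l _ => hf l]; rfl

lemma pd_comm {f : V3 → ℂ} (hf : ContDiffAt ℝ (⊤ : ℕ∞) f z) (a b : Fin 3) :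
    pd a (pd b f) z = pd b (pd a f) z := by
  have hd : DifferentiableAt ℝ (fderiv ℝ f) z :=
    (hf.fderiv_right (m := (⊤ : ℕ∞)) (by exact_mod_cast le_top)).differentiableAt
      (by simp)
  have key : ∀ v w : V3, fderiv ℝ (fun u => fderiv ℝ f u v) z w
      = fderiv ℝ (fderiv ℝ f) z w v := by
    intro v w
    have h := ((ContinuousLinearMap.apply ℝ ℂ v).hasFDerivAt.comp z hd.hasFDerivAt).fderiv
    have h2 : (fun u => fderiv ℝ f u v)
        = (⇑(ContinuousLinearMap.apply ℝ ℂ v) ∘ fderiv ℝ f) := rfl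
    rw [h2, h]
    rfl
  have hsymm : IsSymmSndFDerivAt ℝ f z :=
    hf.isSymmSndFDerivAt (by simp; exact WithTop.coe_le_coe.2 le_top)
  show fderiv ℝ (fun u => fderiv ℝ f u (EuclideanSpace.single b 1)) z (EuclideanSpace.single a 1)
    = fderiv ℝ (fun u => fderiv ℝ f u (EuclideanSpace.single a 1)) z (EuclideanSpace.single b 1)
  rw [key, key]
  exact hsymm _ _


section Higher

variable {ks kp : ℂ} {x : V3}

lemma sm_del : ∀ z : V3, z ≠ y →
    ContDiffAt ℝ (⊤ : ℕ∞) (fun w => gammaK ks w y - gammaK kp w y) z :=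
  fun z hz => (contDiffAt_gam hz).sub (contDiffAt_gam hz)

lemma T_sym (hx : x ≠ y) (j a b : Fin 3) :
    pd a (pd b (pd j (fun w => gammaK ks w y - gammaK kp w y))) x
      = pd b (pd a (pd j (fun w => gammaK ks w y - gammaK kp w y))) x :=
  pd_comm (contDiffAt_pd (sm_del x hx) j) a b

lemma lap3 (hx : x ≠ y) (j : Fin 3) :
    ∑ l, pd l (pd l (pd j (fun w => gammaK k w y))) x
      = -k ^ 2 * pd j (fun w => gammaK k w y) x := by
  have hsm : ∀ z : V3, z ≠ y → ContDiffAt ℝ (⊤ : ℕ∞) (fun w => gammaK k w y) z :=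
    fun z hz => contDiffAt_gam hz
  have step1 : ∀ l : Fin 3, pd l (pd l (pd j (fun w => gammaK k w y))) x
      = pd j (pd l (pd l (fun w => gammaK k w y))) x := by
    intro l
    have h1 : pd l (pd j (fun w => gammaK k w y))
        =ᶠ[nhds x] pd j (pd l (fun w => gammaK k w y)) := by
      filter_upwards [eventually_ne_nhds hx] with z hz
      exact pd_comm (hsm z hz) l j
    calc pd l (pd l (pd j (fun w => gammaK k w y))) x
        = pd l (pd j (pd l (fun w => gammaK k w y))) x := pd_congr h1 l
      _ = pd j (pd l (pd l (fun w => gammaK k w y))) x :=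
          pd_comm (contDiffAt_pd (hsm x hx) l) l j
  rw [Finset.sum_congr rfl fun l _ => step1 l]
  have hdiff : ∀ l : Fin 3, DifferentiableAt ℝ (pd l (pd l (fun w => gammaK k w y))) x :=
    fun l => diffAt (contDiffAt_pd (contDiffAt_pd (hsm x hx) l) l)
  rw [← pd_sum hdiff j]
  have h3 : (fun z : V3 => ∑ l, pd l (pd l (fun w => gammaK k w y)) z)
      =ᶠ[nhds x] fun z => -k ^ 2 * gammaK k z y := by
    filter_upwards [eventually_ne_nhds hx] with z hz
    exact helmholtz hz
  rw [pd_congr h3 j, pd_const_mul (diffAt (hsm x hx)) (-k ^ 2) j]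

lemma d1_split (hx : x ≠ y) (j : Fin 3) :
    pd j (fun w => gammaK ks w y - gammaK kp w y) x
      = pd j (fun w => gammaK ks w y) x - pd j (fun w => gammaK kp w y) x :=
  pd_sub (diffAt (contDiffAt_gam hx)) (diffAt (contDiffAt_gam hx)) j

lemma d2_split (hx : x ≠ y) (a j : Fin 3) :
    pd a (pd j (fun w => gammaK ks w y - gammaK kp w y)) x
      = pd a (pd j (fun w => gammaK ks w y)) x - pd a (pd j (fun w => gammaK kp w y)) x := by
  have h1 : pd j (fun w => gammaK ks w y - gammaK kp w y)
      =ᶠ[nhds x] fun z => pd j (fun w => gammaK ks w y) z - pd j (fun w => gammaK kp w y) z := by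
    filter_upwards [eventually_ne_nhds hx] with z hz
    exact d1_split hz j
  rw [pd_congr h1 a,
    pd_sub (diffAt (contDiffAt_pd (contDiffAt_gam hx) j))
      (diffAt (contDiffAt_pd (contDiffAt_gam hx) j)) a]

lemma d3_split (hx : x ≠ y) (m a j : Fin 3) :
    pd m (pd a (pd j (fun w => gammaK ks w y - gammaK kp w y))) x
      = pd m (pd a (pd j (fun w => gammaK ks w y))) x
        - pd m (pd a (pd j (fun w => gammaK kp w y))) x := by
  have h1 : pd a (pd j (fun w => gammaK ks w y - gammaK kp w y))
      =ᶠ[nhds x] fun z => pd a (pd j (fun w => gammaK ks w y)) z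
        - pd a (pd j (fun w => gammaK kp w y)) z := by
    filter_upwards [eventually_ne_nhds hx] with z hz
    exact d2_split hz a j
  rw [pd_congr h1 m,
    pd_sub (diffAt (contDiffAt_pd (contDiffAt_pd (contDiffAt_gam hx) j) a))
      (diffAt (contDiffAt_pd (contDiffAt_pd (contDiffAt_gam hx) j) a)) m]

lemma diag_del (hx : x ≠ y) (j : Fin 3) :
    ∑ l, pd l (pd l (pd j (fun w => gammaK ks w y - gammaK kp w y))) x
      = -ks ^ 2 * pd j (fun w => gammaK ks w y) x
        + kp ^ 2 * pd j (fun w => gammaK kp w y) x := by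
  rw [Finset.sum_congr rfl fun l _ => d3_split hx l l j, Finset.sum_sub_distrib,
    lap3 hx j, lap3 hx j]
  ring

end Higher

end Aux

lemma cross_curl_alg (ν : Fin 3 → ℝ) (A : Fin 3 → Fin 3 → ℂ) (i : Fin 3) :
    (∑ l, ∑ m, (eps i l m : ℂ) * (ν l : ℂ) * (∑ a, ∑ b, (eps m a b : ℂ) * A a b))
      = (∑ b, (ν b : ℂ) * A i b) - ∑ a, (ν a : ℂ) * A a i := by
  fin_cases i <;> simp [Fin.sum_univ_three, eps] <;> ring

/-- Regularized expression for the traction of the Kupradze tensor in `x`: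
`T(∂_x,ν)E = −ν(∇_x[γ_{k_s}−γ_{k_p}])^⊤ + (∂_ν γ_{k_s})I + M(∂_x,ν)[2μE − γ_{k_s}I]`,
stated entrywise. -/
theorem stmt_4 (μ lam ρ ω : ℝ) (hμ : 0 < μ) (hlam : 0 < lam + 2 * μ)
    (hρ : 0 < ρ) (hω : 0 < ω) (ks kp : ℂ)
    (hks : ks = ((ω * Real.sqrt (ρ / μ) : ℝ) : ℂ))
    (hkp : kp = ((ω * Real.sqrt (ρ / (lam + 2 * μ)) : ℝ) : ℂ))
    (ν : Fin 3 → ℝ) (y x : V3) (hxy : x ≠ y) (i j : Fin 3) :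
    traction lam μ ν (fun l => fun z => kupE μ ρ ω ks kp l j z y) i x
      = -(ν i : ℂ) * pd j (fun w => gammaK ks w y - gammaK kp w y) x
        + dirD ν (fun w => gammaK ks w y) x * (if i = j then 1 else 0)
        + gunterM ν (fun l => fun z =>
            2 * (μ : ℂ) * kupE μ ρ ω ks kp l j z y
              - gammaK ks z y * (if l = j then 1 else 0)) i x  := by
  classical
  have hμ0 : (μ : ℂ) ≠ 0 := by exact_mod_cast hμ.ne'
  have hρ0 : (ρ : ℂ) ≠ 0 := by exact_mod_cast hρ.ne'
  have hω0 : (ω : ℂ) ≠ 0 := by exact_mod_cast hω.ne'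
  have hlam0 : ((lam : ℂ) + 2 * (μ : ℂ)) ≠ 0 := by
    have : ((lam + 2 * μ : ℝ) : ℂ) ≠ 0 := by exact_mod_cast hlam.ne'
    push_cast at this; exact this
  have hks2 : (μ : ℂ) * ((1 / ((ρ : ℂ) * (ω : ℂ) ^ 2)) * ks ^ 2) = 1 := by
    have h1 : ks ^ 2 = ((ω ^ 2 * (ρ / μ) : ℝ) : ℂ) := by
      rw [hks, ← Complex.ofReal_pow]
      congr 1
      rw [mul_pow, Real.sq_sqrt (div_nonneg hρ.le hμ.le)]
    rw [h1]
    push_cast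
    field_simp
  have hkp2 : ((lam : ℂ) + 2 * (μ : ℂ)) * ((1 / ((ρ : ℂ) * (ω : ℂ) ^ 2)) * kp ^ 2) = 1 := by
    have h1 : kp ^ 2 = ((ω ^ 2 * (ρ / (lam + 2 * μ)) : ℝ) : ℂ) := by
      rw [hkp, ← Complex.ofReal_pow]
      congr 1
      rw [mul_pow, Real.sq_sqrt (div_nonneg hρ.le hlam.le)]
    rw [h1]
    have hlamr : ((lam + 2 * μ : ℝ) : ℂ) ≠ 0 := by exact_mod_cast hlam.ne'
    push_cast
    push_cast at hlamr
    field_simp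
  -- differentiability helpers
  have hdg : ∀ (k : ℂ), DifferentiableAt ℝ (fun w => gammaK k w y) x :=
    fun k => Aux.diffAt (Aux.contDiffAt_gam hxy)
  have hdel : ContDiffAt ℝ (⊤ : ℕ∞) (fun w => gammaK ks w y - gammaK kp w y) x :=
    Aux.sm_del x hxy
  have hd2 : ∀ l : Fin 3, DifferentiableAt ℝ
      (pd l (pd j (fun w => gammaK ks w y - gammaK kp w y))) x :=
    fun l => Aux.diffAt (Aux.contDiffAt_pd (Aux.contDiffAt_pd hdel j) l)
  -- rewrite of pd applied to kupE columns
  have hkup : ∀ m l : Fin 3, pd m (fun z => kupE μ ρ ω ks kp l j z y) x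
      = (1 / (μ : ℂ)) * pd m (fun w => gammaK ks w y) x * (if l = j then 1 else 0)
        + (1 / ((ρ : ℂ) * (ω : ℂ) ^ 2)) *
          pd m (pd l (pd j (fun w => gammaK ks w y - gammaK kp w y))) x := by
    intro m l
    have e1 : (fun z => kupE μ ρ ω ks kp l j z y)
        = fun z => ((1 / (μ : ℂ)) * gammaK ks z y) * (if l = j then (1:ℂ) else 0)
          + (1 / ((ρ : ℂ) * (ω : ℂ) ^ 2)) *
            pd l (pd j (fun w => gammaK ks w y - gammaK kp w y)) z := rfl
    rw [e1, Aux.pd_add (((hdg ks).const_mul _).mul_const _) ((hd2 l).const_mul _) m,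
      Aux.pd_mul_const ((hdg ks).const_mul _) _ m,
      Aux.pd_const_mul (hdg ks) _ m, Aux.pd_const_mul (hd2 l) _ m]
  -- rewrite for the gunterM argument
  have hFF : ∀ m l : Fin 3, pd m (fun z =>
        2 * (μ : ℂ) * kupE μ ρ ω ks kp l j z y
          - gammaK ks z y * (if l = j then 1 else 0)) x
      = 2 * (μ : ℂ) * ((1 / (μ : ℂ)) * pd m (fun w => gammaK ks w y) x * (if l = j then 1 else 0)
          + (1 / ((ρ : ℂ) * (ω : ℂ) ^ 2)) *
            pd m (pd l (pd j (fun w => gammaK ks w y - gammaK kp w y))) x)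
        - pd m (fun w => gammaK ks w y) x * (if l = j then 1 else 0) := by
    intro m l
    have hdkup : DifferentiableAt ℝ (fun z => kupE μ ρ ω ks kp l j z y) x := by
      have e1 : (fun z => kupE μ ρ ω ks kp l j z y)
          = fun z => ((1 / (μ : ℂ)) * gammaK ks z y) * (if l = j then (1:ℂ) else 0)
            + (1 / ((ρ : ℂ) * (ω : ℂ) ^ 2)) *
              pd l (pd j (fun w => gammaK ks w y - gammaK kp w y)) z := rfl
      rw [e1]
      exact (((hdg ks).const_mul _).mul_const _).add ((hd2 l).const_mul _)
    rw [Aux.pd_sub ((hdkup).const_mul _) ((hdg ks).mul_const _) m,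
      Aux.pd_const_mul hdkup _ m, Aux.pd_mul_const (hdg ks) _ m, hkup m l]
  -- unfold the traction and Günter operators
  simp only [traction, dirD, vdiv, gunterM, curl, crossR]
  rw [cross_curl_alg ν (fun a b => pd a (fun z => kupE μ ρ ω ks kp b j z y) x) i]
  simp only [hkup, hFF]
  rw [Aux.d1_split hxy j]
  have hsym : ∀ m : Fin 3,
      pd m (pd i (pd j (fun w => gammaK ks w y - gammaK kp w y))) x
        = pd i (pd m (pd j (fun w => gammaK ks w y - gammaK kp w y))) x :=
    fun m => Aux.T_sym hxy j m i
  have hdiag := Aux.diag_del (ks := ks) (kp := kp) hxy j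
  simp only [Fin.sum_univ_three] at hdiag
  have hμa : (μ : ℂ) * (1 / (μ : ℂ)) = 1 := by field_simp
  have hlame : ((lam : ℂ) + 2 * (μ : ℂ)) * (1 / ((lam : ℂ) + 2 * (μ : ℂ))) = 1 := by
    field_simp
  have hbks : (1 / ((ρ : ℂ) * (ω : ℂ) ^ 2)) * ks ^ 2 = 1 / (μ : ℂ) := by
    rw [eq_div_iff hμ0]; linear_combination hks2
  have hbkp : (1 / ((ρ : ℂ) * (ω : ℂ) ^ 2)) * kp ^ 2 = 1 / ((lam : ℂ) + 2 * (μ : ℂ)) := by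
    rw [eq_div_iff hlam0]; linear_combination hkp2
  have hGd : pd 0 (fun w => gammaK ks w y) x * (if (0 : Fin 3) = j then (1:ℂ) else 0)
      + pd 1 (fun w => gammaK ks w y) x * (if (1 : Fin 3) = j then (1:ℂ) else 0)
      + pd 2 (fun w => gammaK ks w y) x * (if (2 : Fin 3) = j then (1:ℂ) else 0)
      = pd j (fun w => gammaK ks w y) x := by
    fin_cases j <;> simp
  simp only [Fin.sum_univ_three]
  linear_combination
    (((ν 0 : ℂ) * pd 0 (fun w => gammaK ks w y) x + (ν 1 : ℂ) * pd 1 (fun w => gammaK ks w y) x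
        + (ν 2 : ℂ) * pd 2 (fun w => gammaK ks w y) x) * (if i = j then (1:ℂ) else 0)
      - ((ν 0 : ℂ) * (if (0 : Fin 3) = j then (1:ℂ) else 0)
          + (ν 1 : ℂ) * (if (1 : Fin 3) = j then (1:ℂ) else 0)
          + (ν 2 : ℂ) * (if (2 : Fin 3) = j then (1:ℂ) else 0))
        * pd i (fun w => gammaK ks w y) x) * hμa
    + (μ : ℂ) * (1 / ((ρ : ℂ) * (ω : ℂ) ^ 2))
      * ((ν 0 : ℂ) * hsym 0 + (ν 1 : ℂ) * hsym 1 + (ν 2 : ℂ) * hsym 2)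
    + (ν i : ℂ) * ((lam : ℂ) + 2 * (μ : ℂ)) * (1 / ((ρ : ℂ) * (ω : ℂ) ^ 2)) * hdiag
    - (ν i : ℂ) * ((lam : ℂ) + 2 * (μ : ℂ)) * pd j (fun w => gammaK ks w y) x * hbks
    + (ν i : ℂ) * ((lam : ℂ) + 2 * (μ : ℂ)) * pd j (fun w => gammaK kp w y) x * hbkp
    + (ν i : ℂ) * pd j (fun w => gammaK kp w y) x * hlame
    + (ν i : ℂ) * (((lam : ℂ) + 2 * (μ : ℂ)) * (1 / (μ : ℂ)) - 1) * hGd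
end
end

section
/- For every x ≠ y in ℝ³ and every constant vector ν ∈ ℝ³, the traction of the Kupradze tensor in the variable y satisfies T(∂_y,ν)E(x,y) = −ν (∇_y[γ_{k_s}(x,y)−γ_{k_p}(x,y)])^⊤ + (ν·∇_y γ_{k_s}(x,y)) I + M(∂_y,ν)[2μ E(x,y) − γ_{k_s}(x,y) I], where all differentiations are taken in the variable y and I is the 3×3 identity matrix. -/
noncomputable section

open scoped BigOperators

set_option maxHeartbeats 4000000

section AuxKupradze

open Complex

/-- real Laurent coefficient -/
def pw (n : ℕ) (s : ℝ) : ℝ := (4*Real.pi)⁻¹ * s⁻¹^n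

lemma pw_hasDerivAt (n : ℕ) {s : ℝ} (hs : s ≠ 0) :
    HasDerivAt (pw (n+1)) (-(((n:ℝ)+1)) * pw (n+2) s) s := by
  have h := ((hasDerivAt_inv hs).pow (n+1)).const_mul ((4*Real.pi)⁻¹)
  refine h.congr_deriv ?_
  simp only [pw, Nat.add_sub_cancel]
  push_cast
  try ring
  try exact Or.inl trivial

lemma pw_mul {s : ℝ} (hs : s ≠ 0) (n : ℕ) :
    ((s:ℂ)) * ((pw (n+1) s : ℝ):ℂ) = ((pw n s : ℝ):ℂ) := by
  have : s * pw (n+1) s = pw n s := by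
    simp only [pw, pow_succ]
    field_simp
  exact_mod_cast congrArg (fun t : ℝ => (t:ℂ)) this

/-- Radial profiles, parameterized by `κ = I*k`. -/
def radF (κ : ℂ) (s : ℝ) : ℂ := Complex.exp (κ*s) * ((pw 1 s : ℝ):ℂ)
def radA (κ : ℂ) (s : ℝ) : ℂ :=
  Complex.exp (κ*s) * (κ*((pw 2 s : ℝ):ℂ) - ((pw 3 s : ℝ):ℂ))
def radC (κ : ℂ) (s : ℝ) : ℂ :=
  Complex.exp (κ*s) * (κ^2*((pw 3 s : ℝ):ℂ) - 3*κ*((pw 4 s : ℝ):ℂ) + 3*((pw 5 s : ℝ):ℂ))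
def radD (κ : ℂ) (s : ℝ) : ℂ :=
  Complex.exp (κ*s) * (κ^3*((pw 4 s : ℝ):ℂ) - 6*κ^2*((pw 5 s : ℝ):ℂ)
    + 15*κ*((pw 6 s : ℝ):ℂ) - 15*((pw 7 s : ℝ):ℂ))

lemma gammaK_eq (k : ℂ) (x y : V3) : gammaK k x y = radF (I*k) ‖x - y‖ := by
  simp only [gammaK, radF, pw]
  rcases eq_or_ne (‖x - y‖) 0 with h | h
  · simp [h]
  · push_cast
    field_simp

lemma expk_hasDerivAt (κ : ℂ) (s : ℝ) :
    HasDerivAt (fun t : ℝ => Complex.exp (κ*t)) (κ*Complex.exp (κ*s)) s := by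
  have h0 : HasDerivAt (fun t : ℝ => (t:ℂ)) 1 s := by
    simpa using (hasDerivAt_id s).ofReal_comp
  have h := (h0.const_mul κ).cexp
  convert h using 1
  ring

lemma pwC_hasDerivAt (n : ℕ) {s : ℝ} (hs : s ≠ 0) :
    HasDerivAt (fun t : ℝ => ((pw (n+1) t : ℝ):ℂ)) ((-(((n:ℝ)+1)) * pw (n+2) s : ℝ):ℂ) s :=
  (pw_hasDerivAt n hs).ofReal_comp

lemma radF_hasDerivAt (κ : ℂ) {s : ℝ} (hs : s ≠ 0) :
    HasDerivAt (radF κ) ((s:ℂ) * radA κ s) s := by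
  have h := (expk_hasDerivAt κ s).mul (pwC_hasDerivAt 0 hs)
  refine h.congr_deriv ?_
  simp only [radA]
  push_cast
  norm_num
  rw [show ((pw 1 s:ℝ):ℂ) = (s:ℂ) * ((pw 2 s:ℝ):ℂ) from (pw_mul hs 1).symm,
      show ((pw 2 s:ℝ):ℂ) = (s:ℂ) * ((pw 3 s:ℝ):ℂ) from (pw_mul hs 2).symm]
  ring

lemma radA_hasDerivAt (κ : ℂ) {s : ℝ} (hs : s ≠ 0) :
    HasDerivAt (radA κ) ((s:ℂ) * radC κ s) s := by
  have h := (expk_hasDerivAt κ s).mul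
    (((pwC_hasDerivAt 1 hs).const_mul κ).sub (pwC_hasDerivAt 2 hs))
  refine h.congr_deriv ?_
  simp only [radC]
  push_cast
  norm_num
  rw [show ((pw 2 s:ℝ):ℂ) = (s:ℂ) * ((pw 3 s:ℝ):ℂ) from (pw_mul hs 2).symm,
      show ((pw 3 s:ℝ):ℂ) = (s:ℂ) * ((pw 4 s:ℝ):ℂ) from (pw_mul hs 3).symm,
      show ((pw 4 s:ℝ):ℂ) = (s:ℂ) * ((pw 5 s:ℝ):ℂ) from (pw_mul hs 4).symm]
  ring

lemma radC_hasDerivAt (κ : ℂ) {s : ℝ} (hs : s ≠ 0) :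
    HasDerivAt (radC κ) ((s:ℂ) * radD κ s) s := by
  have h := (expk_hasDerivAt κ s).mul
    ((((pwC_hasDerivAt 2 hs).const_mul (κ^2)).sub
      ((pwC_hasDerivAt 3 hs).const_mul (3*κ))).add
      ((pwC_hasDerivAt 4 hs).const_mul 3))
  refine h.congr_deriv ?_
  simp only [radD]
  push_cast
  norm_num
  rw [show ((pw 3 s:ℝ):ℂ) = (s:ℂ) * ((pw 4 s:ℝ):ℂ) from (pw_mul hs 3).symm,
      show ((pw 4 s:ℝ):ℂ) = (s:ℂ) * ((pw 5 s:ℝ):ℂ) from (pw_mul hs 4).symm,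
      show ((pw 5 s:ℝ):ℂ) = (s:ℂ) * ((pw 6 s:ℝ):ℂ) from (pw_mul hs 5).symm,
      show ((pw 6 s:ℝ):ℂ) = (s:ℂ) * ((pw 7 s:ℝ):ℂ) from (pw_mul hs 6).symm]
  ring

lemma helmD (κ : ℂ) {s : ℝ} (hs : s ≠ 0) :
    radD κ s * (s:ℂ)^2 + 5 * radC κ s = κ^2 * radA κ s := by
  simp only [radD, radC, radA]
  rw [show ((pw 2 s:ℝ):ℂ) = (s:ℂ) * ((pw 3 s:ℝ):ℂ) from (pw_mul hs 2).symm,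
      show ((pw 3 s:ℝ):ℂ) = (s:ℂ) * ((pw 4 s:ℝ):ℂ) from (pw_mul hs 3).symm,
      show ((pw 4 s:ℝ):ℂ) = (s:ℂ) * ((pw 5 s:ℝ):ℂ) from (pw_mul hs 4).symm,
      show ((pw 5 s:ℝ):ℂ) = (s:ℂ) * ((pw 6 s:ℝ):ℂ) from (pw_mul hs 5).symm,
      show ((pw 6 s:ℝ):ℂ) = (s:ℂ) * ((pw 7 s:ℝ):ℂ) from (pw_mul hs 6).symm]
  ring

def sgl (m : Fin 3) : V3 := EuclideanSpace.single m (1 : ℝ)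

/-- `f` has all partial derivatives `g` at `z`. -/
def HasPD (f : V3 → ℂ) (g : Fin 3 → ℂ) (z : V3) : Prop :=
  ∃ L : V3 →L[ℝ] ℂ, HasFDerivAt f L z ∧ ∀ m, L (sgl m) = g m

namespace HasPD

variable {f f₁ : V3 → ℂ} {g g₁ : Fin 3 → ℂ} {z : V3}

lemma pd_eq (h : HasPD f g z) (m : Fin 3) : pd m f z = g m := by
  obtain ⟨L, hL, he⟩ := h
  rw [pd, hL.fderiv]; exact he m

lemma differentiableAt (h : HasPD f g z) : DifferentiableAt ℝ f z := by
  obtain ⟨L, hL, _⟩ := h; exact hL.differentiableAt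

lemma congr_nhds (h : HasPD f g z) (hfg : f =ᶠ[nhds z] f₁) : HasPD f₁ g z := by
  obtain ⟨L, hL, he⟩ := h
  exact ⟨L, hL.congr_of_eventuallyEq hfg.symm, he⟩

lemma congr_g (h : HasPD f g z) (hgg : ∀ m, g m = g₁ m) : HasPD f g₁ z := by
  obtain ⟨L, hL, he⟩ := h
  exact ⟨L, hL, fun m => (he m).trans (hgg m)⟩

lemma add (h : HasPD f g z) (h₁ : HasPD f₁ g₁ z) :
    HasPD (fun w => f w + f₁ w) (fun m => g m + g₁ m) z := by
  obtain ⟨L, hL, he⟩ := h; obtain ⟨L₁, hL₁, he₁⟩ := h₁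
  exact ⟨L + L₁, hL.add hL₁, fun m => by simp [he m, he₁ m]⟩

lemma sub (h : HasPD f g z) (h₁ : HasPD f₁ g₁ z) :
    HasPD (fun w => f w - f₁ w) (fun m => g m - g₁ m) z := by
  obtain ⟨L, hL, he⟩ := h; obtain ⟨L₁, hL₁, he₁⟩ := h₁
  exact ⟨L - L₁, hL.sub hL₁, fun m => by simp [he m, he₁ m]⟩

lemma const_mul (h : HasPD f g z) (c : ℂ) :
    HasPD (fun w => c * f w) (fun m => c * g m) z := by
  obtain ⟨L, hL, he⟩ := h
  exact ⟨c • L, hL.const_mul c, fun m => by simp [he m]⟩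

lemma mul_const (h : HasPD f g z) (c : ℂ) :
    HasPD (fun w => f w * c) (fun m => g m * c) z := by
  obtain ⟨L, hL, he⟩ := h
  refine ⟨c • L, ?_, fun m => by simp [he m]; ring⟩
  have := hL.const_mul c
  exact this.congr_of_eventuallyEq (by filter_upwards with w; ring)

lemma mul (h : HasPD f g z) (h₁ : HasPD f₁ g₁ z) :
    HasPD (fun w => f w * f₁ w) (fun m => f z * g₁ m + f₁ z * g m) z := by
  obtain ⟨L, hL, he⟩ := h; obtain ⟨L₁, hL₁, he₁⟩ := h₁
  exact ⟨f z • L₁ + f₁ z • L, hL.mul hL₁, fun m => by simp [he m, he₁ m]⟩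

end HasPD

lemma hasPD_const (c : ℂ) (z : V3) : HasPD (fun _ => c) (fun _ => 0) z :=
  ⟨0, hasFDerivAt_const c z, fun m => by simp⟩

/-- coordinate field, center `a` -/
lemma hasPD_coord (a : V3) (j : Fin 3) (z : V3) :
    HasPD (fun w => ((w j - a j : ℝ):ℂ)) (fun m => if j = m then 1 else 0) z := by
  have h1 : HasFDerivAt (fun w : V3 => w j - a j) (EuclideanSpace.proj j (𝕜 := ℝ)) z := by
    simpa using ((EuclideanSpace.proj j (𝕜 := ℝ)).hasFDerivAt (x := z)).sub_const (a j)
  refine ⟨Complex.ofRealCLM.comp (EuclideanSpace.proj j), ?_, ?_⟩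
  · exact (Complex.ofRealCLM.hasFDerivAt).comp z h1
  · intro m
    simp [sgl, EuclideanSpace.single_apply]
    split <;> simp

lemma hasPD_radial (a : V3) {z : V3} (hz : z ≠ a) {φ ψ : ℝ → ℂ}
    (hφ : HasDerivAt φ ((‖z - a‖ : ℂ) * ψ ‖z - a‖) ‖z - a‖) :
    HasPD (fun w => φ ‖w - a‖) (fun m => ψ ‖z - a‖ * ((z m - a m : ℝ):ℂ)) z := by
  have hs : ‖z - a‖ ≠ 0 := norm_ne_zero_iff.2 (sub_ne_zero.2 hz)
  have hs2 : ‖z - a‖^2 ≠ 0 := pow_ne_zero _ hs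
  have hq : HasFDerivAt (fun w : V3 => ‖w - a‖^2) (2 • (innerSL ℝ (z - a))) z := by
    simpa using ((hasFDerivAt_id z).sub_const a).norm_sq
  have hnorm : HasFDerivAt (fun w : V3 => ‖w - a‖)
      ((1/(2*Real.sqrt (‖z - a‖^2))) • (2 • (innerSL ℝ (z - a)))) z := by
    have h := (Real.hasDerivAt_sqrt hs2).comp_hasFDerivAt z hq
    have hfun : (Real.sqrt ∘ fun w : V3 => ‖w - a‖^2) = fun w : V3 => ‖w - a‖ := by
      funext w; simp [Function.comp, Real.sqrt_sq (norm_nonneg _)]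
    rwa [hfun] at h
  have hc : HasFDerivAt (fun w : V3 => φ ‖w - a‖)
      ((ContinuousLinearMap.smulRight (1 : ℝ →L[ℝ] ℝ) ((‖z - a‖ : ℂ) * ψ ‖z - a‖)).comp
        ((1/(2*Real.sqrt (‖z - a‖^2))) • (2 • (innerSL ℝ (z - a))))) z :=
    (hφ.hasFDerivAt).comp z hnorm
  refine ⟨_, hc, fun m => ?_⟩
  have hin : (innerSL ℝ (z - a)) (sgl m) = z m - a m := by
    simp [sgl, EuclideanSpace.inner_single_right, real_inner_comm]
  simp only [ContinuousLinearMap.coe_comp', Function.comp_apply,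
    ContinuousLinearMap.coe_smul', Pi.smul_apply, ContinuousLinearMap.smulRight_apply,
    ContinuousLinearMap.one_apply, hin, smul_eq_mul, Real.sqrt_sq (norm_nonneg _)]
  rw [Complex.real_smul]
  have hsC : ((‖z - a‖ : ℝ):ℂ) ≠ 0 := by exact_mod_cast hs
  push_cast
  field_simp [hsC]
  try ring

/-! ### derivative differences -/

lemma radFd_hasDerivAt (κ1 κ2 : ℂ) {s : ℝ} (hs : s ≠ 0) :
    HasDerivAt (fun t => radF κ1 t - radF κ2 t) ((s:ℂ) * (radA κ1 s - radA κ2 s)) s := by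
  have h := (radF_hasDerivAt κ1 hs).sub (radF_hasDerivAt κ2 hs)
  exact h.congr_deriv (by ring)

lemma radAd_hasDerivAt (κ1 κ2 : ℂ) {s : ℝ} (hs : s ≠ 0) :
    HasDerivAt (fun t => radA κ1 t - radA κ2 t) ((s:ℂ) * (radC κ1 s - radC κ2 s)) s := by
  have h := (radA_hasDerivAt κ1 hs).sub (radA_hasDerivAt κ2 hs)
  exact h.congr_deriv (by ring)

lemma radCd_hasDerivAt (κ1 κ2 : ℂ) {s : ℝ} (hs : s ≠ 0) :
    HasDerivAt (fun t => radC κ1 t - radC κ2 t) ((s:ℂ) * (radD κ1 s - radD κ2 s)) s := by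
  have h := (radC_hasDerivAt κ1 hs).sub (radC_hasDerivAt κ2 hs)
  exact h.congr_deriv (by ring)

/-! ### gamma layer -/

lemma norm_ne (a : V3) {z : V3} (hz : z ≠ a) : ‖z - a‖ ≠ 0 :=
  norm_ne_zero_iff.2 (sub_ne_zero.2 hz)

lemma hasPD_radF (κ : ℂ) (a : V3) {z : V3} (hz : z ≠ a) :
    HasPD (fun w => radF κ ‖w - a‖) (fun m => radA κ ‖z - a‖ * ((z m - a m : ℝ):ℂ)) z :=
  hasPD_radial a hz (radF_hasDerivAt κ (norm_ne a hz))

lemma hasPD_radFd (κ1 κ2 : ℂ) (a : V3) {z : V3} (hz : z ≠ a) :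
    HasPD (fun w => radF κ1 ‖w - a‖ - radF κ2 ‖w - a‖)
      (fun m => (radA κ1 ‖z - a‖ - radA κ2 ‖z - a‖) * ((z m - a m : ℝ):ℂ)) z :=
  hasPD_radial a hz (φ := fun t => radF κ1 t - radF κ2 t)
    (ψ := fun t => radA κ1 t - radA κ2 t) (radFd_hasDerivAt κ1 κ2 (norm_ne a hz))

/-- the first `y`-derivative of a difference of radial profiles, as a function on `{z ≠ a}` -/
lemma pd_radFd (κ1 κ2 : ℂ) (a : V3) {z : V3} (hz : z ≠ a) (j : Fin 3) :
    pd j (fun w => radF κ1 ‖w - a‖ - radF κ2 ‖w - a‖) z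
      = (radA κ1 ‖z - a‖ - radA κ2 ‖z - a‖) * ((z j - a j : ℝ):ℂ) :=
  (hasPD_radFd κ1 κ2 a hz).pd_eq j

/-- HasPD of the first derivative (gives the Hessian). -/
lemma hasPD_pd_radFd (κ1 κ2 : ℂ) (a : V3) {z : V3} (hz : z ≠ a) (j : Fin 3) :
    HasPD (pd j (fun w => radF κ1 ‖w - a‖ - radF κ2 ‖w - a‖))
      (fun m => (radA κ1 ‖z - a‖ - radA κ2 ‖z - a‖) * (if j = m then 1 else 0)
        + ((z j - a j : ℝ):ℂ) * ((radC κ1 ‖z - a‖ - radC κ2 ‖z - a‖) * ((z m - a m : ℝ):ℂ))) z := by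
  have hmodel := (hasPD_radial a hz (φ := fun t => radA κ1 t - radA κ2 t)
    (ψ := fun t => radC κ1 t - radC κ2 t) (radAd_hasDerivAt κ1 κ2 (norm_ne a hz))).mul
    (hasPD_coord a j z)
  refine hmodel.congr_nhds ?_
  have hmem : {w : V3 | w ≠ a} ∈ nhds z := isOpen_ne.mem_nhds hz
  filter_upwards [hmem] with w hw
  exact (pd_radFd κ1 κ2 a hw j).symm

lemma pd_pd_radFd (κ1 κ2 : ℂ) (a : V3) {z : V3} (hz : z ≠ a) (j l : Fin 3) :
    pd l (pd j (fun w => radF κ1 ‖w - a‖ - radF κ2 ‖w - a‖)) z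
      = (radA κ1 ‖z - a‖ - radA κ2 ‖z - a‖) * (if j = l then 1 else 0)
        + ((z j - a j : ℝ):ℂ) * ((radC κ1 ‖z - a‖ - radC κ2 ‖z - a‖) * ((z l - a l : ℝ):ℂ)) :=
  (hasPD_pd_radFd κ1 κ2 a hz j).pd_eq l


/-- pointwise closed form of the Kupradze entry -/
lemma kupE_eq (μ ρ ω : ℝ) (ks kp : ℂ) (x : V3) {z : V3} (hz : z ≠ x) (l j : Fin 3) :
    kupE μ ρ ω ks kp l j x z
      = (1/(μ:ℂ)) * radF (I*ks) ‖z-x‖ * (if l = j then 1 else 0)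
        + (1/((ρ:ℂ)*(ω:ℂ)^2)) *
          ((radA (I*ks) ‖z-x‖ - radA (I*kp) ‖z-x‖) * (if l = j then 1 else 0)
            + ((z j - x j : ℝ):ℂ) * ((radC (I*ks) ‖z-x‖ - radC (I*kp) ‖z-x‖) * ((z l - x l : ℝ):ℂ))) := by
  have hxz : x ≠ z := hz.symm
  unfold kupE
  have hfun : (fun w => gammaK ks w z - gammaK kp w z)
      = fun w => radF (I*ks) ‖w - z‖ - radF (I*kp) ‖w - z‖ := by
    funext w; rw [gammaK_eq, gammaK_eq]
  rw [hfun, pd_pd_radFd (I*ks) (I*kp) z hxz j l]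
  rw [gammaK_eq ks x z, norm_sub_rev x z]
  have h1 : ((x j - z j : ℝ):ℂ) = -((z j - x j : ℝ):ℂ) := by push_cast; ring
  have h2 : ((x l - z l : ℝ):ℂ) = -((z l - x l : ℝ):ℂ) := by push_cast; ring
  have h3 : (if j = l then (1:ℂ) else 0) = (if l = j then 1 else 0) := by
    by_cases h : j = l <;> simp [h, Ne.symm, eq_comm]
  rw [h1, h2, h3]
  ring

def UU (x y : V3) (m : Fin 3) : ℂ := ((y m - x m : ℝ):ℂ)

def gE (μ ρ ω : ℝ) (ks kp : ℂ) (x y : V3) (j l m : Fin 3) : ℂ :=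
  ((1/(μ:ℂ)) * (radA (I*ks) ‖y-x‖ * UU x y m)) * (if l = j then 1 else 0)
  + (1/((ρ:ℂ)*(ω:ℂ)^2)) *
    (((radC (I*ks) ‖y-x‖ - radC (I*kp) ‖y-x‖) * UU x y m) * (if l = j then 1 else 0)
      + (UU x y j * ((radC (I*ks) ‖y-x‖ - radC (I*kp) ‖y-x‖) * (if l = m then 1 else 0)
          + UU x y l * ((radD (I*ks) ‖y-x‖ - radD (I*kp) ‖y-x‖) * UU x y m))
        + ((radC (I*ks) ‖y-x‖ - radC (I*kp) ‖y-x‖) * UU x y l) * (if j = m then 1 else 0)))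

lemma hasPD_kupE (μ ρ ω : ℝ) (ks kp : ℂ) (x : V3) {y : V3} (hy : y ≠ x) (l j : Fin 3) :
    HasPD (fun z => kupE μ ρ ω ks kp l j x z) (gE μ ρ ω ks kp x y j l) y := by
  have hS := norm_ne x hy
  have t1 := ((hasPD_radF (I*ks) x hy).const_mul (1/(μ:ℂ))).mul_const
    (if l = j then (1:ℂ) else 0)
  have t2a := (hasPD_radial x hy (φ := fun t => radA (I*ks) t - radA (I*kp) t)
    (ψ := fun t => radC (I*ks) t - radC (I*kp) t)
    (radAd_hasDerivAt (I*ks) (I*kp) hS)).mul_const (if l = j then (1:ℂ) else 0)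
  have t2b := (hasPD_coord x j y).mul
    ((hasPD_radial x hy (φ := fun t => radC (I*ks) t - radC (I*kp) t)
      (ψ := fun t => radD (I*ks) t - radD (I*kp) t)
      (radCd_hasDerivAt (I*ks) (I*kp) hS)).mul (hasPD_coord x l y))
  have htot := t1.add ((t2a.add t2b).const_mul (1/((ρ:ℂ)*(ω:ℂ)^2)))
  have hev : (fun z => ((1/(μ:ℂ)) * radF (I*ks) ‖z-x‖) * (if l = j then (1:ℂ) else 0)
      + (1/((ρ:ℂ)*(ω:ℂ)^2)) *
        ((radA (I*ks) ‖z-x‖ - radA (I*kp) ‖z-x‖) * (if l = j then 1 else 0)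
          + ((z j - x j : ℝ):ℂ) * ((radC (I*ks) ‖z-x‖ - radC (I*kp) ‖z-x‖) * ((z l - x l : ℝ):ℂ))))
      =ᶠ[nhds y] (fun z => kupE μ ρ ω ks kp l j x z) := by
    filter_upwards [isOpen_ne.mem_nhds hy] with w hw
    exact (kupE_eq μ ρ ω ks kp x hw l j).symm
  exact HasPD.congr_nhds htot hev

lemma sumgE (μ ρ ω lam : ℝ) (ks kp : ℂ) (x y : V3) (j : Fin 3)
    (hS : ‖y - x‖ ≠ 0)
    (hu : (UU x y 0)^2 + (UU x y 1)^2 + (UU x y 2)^2 = ((‖y-x‖:ℝ):ℂ)^2)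
    (hccs : (1/((ρ:ℂ)*(ω:ℂ)^2)) * ks^2 = 1/(μ:ℂ))
    (hccp : (1/((ρ:ℂ)*(ω:ℂ)^2)) * kp^2 = 1/((lam:ℂ)+2*(μ:ℂ))) :
    ∑ l, gE μ ρ ω ks kp x y j l l
      = (1/((lam:ℂ)+2*(μ:ℂ))) * radA (I*kp) ‖y-x‖ * UU x y j := by
  have hX : (radD (I*ks) ‖y-x‖ - radD (I*kp) ‖y-x‖)
        * ((UU x y 0)^2+(UU x y 1)^2+(UU x y 2)^2)
      + 5*(radC (I*ks) ‖y-x‖ - radC (I*kp) ‖y-x‖)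
      = -ks^2*radA (I*ks) ‖y-x‖ + kp^2*radA (I*kp) ‖y-x‖ := by
    rw [hu]
    linear_combination (helmD (I*ks) hS) - (helmD (I*kp) hS)
      + (ks^2*radA (I*ks) ‖y-x‖ - kp^2*radA (I*kp) ‖y-x‖)*Complex.I_sq
  fin_cases j
  · simp only [Fin.sum_univ_three, gE]
    norm_num [Fin.ext_iff]
    linear_combination (1/((ρ:ℂ)*(ω:ℂ)^2)) * UU x y 0 * hX
      - radA (I*ks) ‖y-x‖ * UU x y 0 * hccs + radA (I*kp) ‖y-x‖ * UU x y 0 * hccp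
  · simp only [Fin.sum_univ_three, gE]
    norm_num [Fin.ext_iff]
    linear_combination (1/((ρ:ℂ)*(ω:ℂ)^2)) * UU x y 1 * hX
      - radA (I*ks) ‖y-x‖ * UU x y 1 * hccs + radA (I*kp) ‖y-x‖ * UU x y 1 * hccp
  · simp only [Fin.sum_univ_three, gE]
    norm_num [Fin.ext_iff]
    simp only [show (⟨2, by norm_num⟩ : Fin 3) = (2 : Fin 3) from rfl]
    linear_combination (1/((ρ:ℂ)*(ω:ℂ)^2)) * UU x y 2 * hX
      - radA (I*ks) ‖y-x‖ * UU x y 2 * hccs + radA (I*kp) ‖y-x‖ * UU x y 2 * hccp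


end AuxKupradze

/-- Regularized expression for the traction of the Kupradze tensor in `y`:
`T(∂_y,ν)E = −ν(∇_y[γ_{k_s}−γ_{k_p}])^⊤ + (ν·∇_y γ_{k_s})I + M(∂_y,ν)[2μE − γ_{k_s}I]`,
stated entrywise, all differentiations in the variable `y`. -/
theorem stmt_5 (μ lam ρ ω : ℝ) (hμ : 0 < μ) (hlam : 0 < lam + 2 * μ)
    (hρ : 0 < ρ) (hω : 0 < ω) (ks kp : ℂ)
    (hks : ks = ((ω * Real.sqrt (ρ / μ) : ℝ) : ℂ))
    (hkp : kp = ((ω * Real.sqrt (ρ / (lam + 2 * μ)) : ℝ) : ℂ))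
    (ν : Fin 3 → ℝ) (x y : V3) (hxy : x ≠ y) (i j : Fin 3) :
    traction lam μ ν (fun l => fun z => kupE μ ρ ω ks kp l j x z) i y
      = -(ν i : ℂ) * pd j (fun z => gammaK ks x z - gammaK kp x z) y
        + dirD ν (fun z => gammaK ks x z) y * (if i = j then 1 else 0)
        + gunterM ν (fun l => fun z =>
            2 * (μ : ℂ) * kupE μ ρ ω ks kp l j x z
              - gammaK ks x z * (if l = j then 1 else 0)) i y := by
  have hyx : y ≠ x := Ne.symm hxy
  have hS : ‖y - x‖ ≠ 0 := norm_ne x hyx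
  have hμ' : (μ:ℂ) ≠ 0 := by exact_mod_cast hμ.ne'
  have hρ' : (ρ:ℂ) ≠ 0 := by exact_mod_cast hρ.ne'
  have hω' : (ω:ℂ) ≠ 0 := by exact_mod_cast hω.ne'
  have hlam' : (lam:ℂ) + 2*(μ:ℂ) ≠ 0 := by
    have h0 : ((lam + 2*μ : ℝ):ℂ) ≠ 0 := by exact_mod_cast hlam.ne'
    push_cast at h0
    convert h0 using 2
  have hccs : (1/((ρ:ℂ)*(ω:ℂ)^2)) * ks^2 = 1/(μ:ℂ) := by
    rw [hks]
    have h1 : ((ω * Real.sqrt (ρ/μ) : ℝ):ℂ)^2 = ((ω^2 * (ρ/μ) : ℝ):ℂ) := by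
      norm_cast
      rw [mul_pow, Real.sq_sqrt (by positivity)]
    rw [h1]
    push_cast
    field_simp
  have hccp : (1/((ρ:ℂ)*(ω:ℂ)^2)) * kp^2 = 1/((lam:ℂ)+2*(μ:ℂ)) := by
    rw [hkp]
    have h1 : ((ω * Real.sqrt (ρ/(lam+2*μ)) : ℝ):ℂ)^2 = ((ω^2 * (ρ/(lam+2*μ)) : ℝ):ℂ) := by
      norm_cast
      rw [mul_pow, Real.sq_sqrt (by positivity)]
    rw [h1]
    push_cast
    field_simp
  have hu : (UU x y 0)^2 + (UU x y 1)^2 + (UU x y 2)^2 = ((‖y-x‖:ℝ):ℂ)^2 := by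
    have hr : ‖y - x‖^2 = (y 0 - x 0)^2 + (y 1 - x 1)^2 + (y 2 - x 2)^2 := by
      rw [EuclideanSpace.norm_eq, Real.sq_sqrt (by positivity)]
      simp [Fin.sum_univ_three, Real.norm_eq_abs, sq_abs]
    unfold UU
    exact_mod_cast hr.symm
  have hE : ∀ l, HasPD (fun z => kupE μ ρ ω ks kp l j x z) (gE μ ρ ω ks kp x y j l) y :=
    fun l => hasPD_kupE μ ρ ω ks kp x hyx l j
  have hγs : HasPD (fun z => gammaK ks x z) (fun m => radA (Complex.I*ks) ‖y-x‖ * UU x y m) y := by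
    refine (hasPD_radF (Complex.I*ks) x hyx).congr_nhds ?_
    filter_upwards with w
    rw [gammaK_eq, norm_sub_rev]
  have hγp : HasPD (fun z => gammaK kp x z) (fun m => radA (Complex.I*kp) ‖y-x‖ * UU x y m) y := by
    refine (hasPD_radF (Complex.I*kp) x hyx).congr_nhds ?_
    filter_upwards with w
    rw [gammaK_eq, norm_sub_rev]
  have hpdE : ∀ l m, pd m (fun z => kupE μ ρ ω ks kp l j x z) y = gE μ ρ ω ks kp x y j l m :=
    fun l m => (hE l).pd_eq m
  have hpdγs : ∀ m, pd m (fun z => gammaK ks x z) y = radA (Complex.I*ks) ‖y-x‖ * UU x y m :=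
    fun m => hγs.pd_eq m
  have hpdγd : pd j (fun z => gammaK ks x z - gammaK kp x z) y
      = radA (Complex.I*ks) ‖y-x‖ * UU x y j - radA (Complex.I*kp) ‖y-x‖ * UU x y j :=
    (hγs.sub hγp).pd_eq j
  have hpdW : ∀ l m, pd m (fun z => 2 * (μ:ℂ) * kupE μ ρ ω ks kp l j x z
        - gammaK ks x z * (if l = j then 1 else 0)) y
      = 2 * (μ:ℂ) * gE μ ρ ω ks kp x y j l m
        - (radA (Complex.I*ks) ‖y-x‖ * UU x y m) * (if l = j then 1 else 0) :=
    fun l m => (((hE l).const_mul (2*(μ:ℂ))).sub (hγs.mul_const _)).pd_eq m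
  have hWsum : ∑ l, (2 * (μ:ℂ) * gE μ ρ ω ks kp x y j l l
        - (radA (Complex.I*ks) ‖y-x‖ * UU x y l) * (if l = j then 1 else 0))
      = 2 * (μ:ℂ) * ((1/((lam:ℂ)+2*(μ:ℂ))) * radA (Complex.I*kp) ‖y-x‖ * UU x y j)
        - radA (Complex.I*ks) ‖y-x‖ * UU x y j := by
    rw [Finset.sum_sub_distrib, ← Finset.mul_sum,
      sumgE μ ρ ω lam ks kp x y j hS hu hccs hccp]
    congr 1
    fin_cases j <;> simp [Fin.sum_univ_three]
  simp only [traction, dirD, vdiv, curl, crossR, gunterM]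
  simp only [hpdE, hpdγs, hpdW]
  rw [hpdγd]
  rw [sumgE μ ρ ω lam ks kp x y j hS hu hccs hccp]
  rw [Finset.sum_sub_distrib, ← Finset.mul_sum, hWsum]
  have hμinv : (μ:ℂ) * (μ:ℂ)⁻¹ = 1 := mul_inv_cancel₀ hμ'
  have hlaminv : ((lam:ℂ) + 2*(μ:ℂ)) * ((lam:ℂ) + 2*(μ:ℂ))⁻¹ = 1 := mul_inv_cancel₀ hlam'
  simp only [Fin.sum_univ_three]
  fin_cases i <;> fin_cases j
  · simp (config := { decide := true }) only [eps, gE, Fin.ext_iff, Prod.mk.injEq]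
    norm_num
    try simp only [show (⟨0, by norm_num⟩ : Fin 3) = (0:Fin 3) from rfl,
      show (⟨1, by norm_num⟩ : Fin 3) = (1:Fin 3) from rfl,
      show (⟨2, by norm_num⟩ : Fin 3) = (2:Fin 3) from rfl]
    linear_combination (radA (Complex.I*ks) ‖y-x‖ * (↑(ν 0) * UU x y 0 + ↑(ν 1) * UU x y 1 + ↑(ν 2) * UU x y 2) - ↑(ν 0) * radA (Complex.I*ks) ‖y-x‖ * UU x y 0) * hμinv + (↑(ν 0) * radA (Complex.I*kp) ‖y-x‖ * UU x y 0) * hlaminv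
  · simp (config := { decide := true }) only [eps, gE, Fin.ext_iff, Prod.mk.injEq]
    norm_num
    try simp only [show (⟨0, by norm_num⟩ : Fin 3) = (0:Fin 3) from rfl,
      show (⟨1, by norm_num⟩ : Fin 3) = (1:Fin 3) from rfl,
      show (⟨2, by norm_num⟩ : Fin 3) = (2:Fin 3) from rfl]
    linear_combination (-(↑(ν 1) * radA (Complex.I*ks) ‖y-x‖ * UU x y 0)) * hμinv + (↑(ν 0) * radA (Complex.I*kp) ‖y-x‖ * UU x y 1) * hlaminv
  · simp (config := { decide := true }) only [eps, gE, Fin.ext_iff, Prod.mk.injEq]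
    norm_num
    try simp only [show (⟨0, by norm_num⟩ : Fin 3) = (0:Fin 3) from rfl,
      show (⟨1, by norm_num⟩ : Fin 3) = (1:Fin 3) from rfl,
      show (⟨2, by norm_num⟩ : Fin 3) = (2:Fin 3) from rfl]
    linear_combination (-(↑(ν 2) * radA (Complex.I*ks) ‖y-x‖ * UU x y 0)) * hμinv + (↑(ν 0) * radA (Complex.I*kp) ‖y-x‖ * UU x y 2) * hlaminv
  · simp (config := { decide := true }) only [eps, gE, Fin.ext_iff, Prod.mk.injEq]
    norm_num
    try simp only [show (⟨0, by norm_num⟩ : Fin 3) = (0:Fin 3) from rfl,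
      show (⟨1, by norm_num⟩ : Fin 3) = (1:Fin 3) from rfl,
      show (⟨2, by norm_num⟩ : Fin 3) = (2:Fin 3) from rfl]
    linear_combination (-(↑(ν 0) * radA (Complex.I*ks) ‖y-x‖ * UU x y 1)) * hμinv + (↑(ν 1) * radA (Complex.I*kp) ‖y-x‖ * UU x y 0) * hlaminv
  · simp (config := { decide := true }) only [eps, gE, Fin.ext_iff, Prod.mk.injEq]
    norm_num
    try simp only [show (⟨0, by norm_num⟩ : Fin 3) = (0:Fin 3) from rfl,
      show (⟨1, by norm_num⟩ : Fin 3) = (1:Fin 3) from rfl,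
      show (⟨2, by norm_num⟩ : Fin 3) = (2:Fin 3) from rfl]
    linear_combination (radA (Complex.I*ks) ‖y-x‖ * (↑(ν 0) * UU x y 0 + ↑(ν 1) * UU x y 1 + ↑(ν 2) * UU x y 2) - ↑(ν 1) * radA (Complex.I*ks) ‖y-x‖ * UU x y 1) * hμinv + (↑(ν 1) * radA (Complex.I*kp) ‖y-x‖ * UU x y 1) * hlaminv
  · simp (config := { decide := true }) only [eps, gE, Fin.ext_iff, Prod.mk.injEq]
    norm_num
    try simp only [show (⟨0, by norm_num⟩ : Fin 3) = (0:Fin 3) from rfl,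
      show (⟨1, by norm_num⟩ : Fin 3) = (1:Fin 3) from rfl,
      show (⟨2, by norm_num⟩ : Fin 3) = (2:Fin 3) from rfl]
    linear_combination (-(↑(ν 2) * radA (Complex.I*ks) ‖y-x‖ * UU x y 1)) * hμinv + (↑(ν 1) * radA (Complex.I*kp) ‖y-x‖ * UU x y 2) * hlaminv
  · simp (config := { decide := true }) only [eps, gE, Fin.ext_iff, Prod.mk.injEq]
    norm_num
    try simp only [show (⟨0, by norm_num⟩ : Fin 3) = (0:Fin 3) from rfl,
      show (⟨1, by norm_num⟩ : Fin 3) = (1:Fin 3) from rfl,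
      show (⟨2, by norm_num⟩ : Fin 3) = (2:Fin 3) from rfl]
    linear_combination (-(↑(ν 0) * radA (Complex.I*ks) ‖y-x‖ * UU x y 2)) * hμinv + (↑(ν 2) * radA (Complex.I*kp) ‖y-x‖ * UU x y 0) * hlaminv
  · simp (config := { decide := true }) only [eps, gE, Fin.ext_iff, Prod.mk.injEq]
    norm_num
    try simp only [show (⟨0, by norm_num⟩ : Fin 3) = (0:Fin 3) from rfl,
      show (⟨1, by norm_num⟩ : Fin 3) = (1:Fin 3) from rfl,
      show (⟨2, by norm_num⟩ : Fin 3) = (2:Fin 3) from rfl]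
    linear_combination (-(↑(ν 1) * radA (Complex.I*ks) ‖y-x‖ * UU x y 2)) * hμinv + (↑(ν 2) * radA (Complex.I*kp) ‖y-x‖ * UU x y 1) * hlaminv
  · simp (config := { decide := true }) only [eps, gE, Fin.ext_iff, Prod.mk.injEq]
    norm_num
    try simp only [show (⟨0, by norm_num⟩ : Fin 3) = (0:Fin 3) from rfl,
      show (⟨1, by norm_num⟩ : Fin 3) = (1:Fin 3) from rfl,
      show (⟨2, by norm_num⟩ : Fin 3) = (2:Fin 3) from rfl]
    linear_combination (radA (Complex.I*ks) ‖y-x‖ * (↑(ν 0) * UU x y 0 + ↑(ν 1) * UU x y 1 + ↑(ν 2) * UU x y 2) - ↑(ν 2) * radA (Complex.I*ks) ‖y-x‖ * UU x y 2) * hμinv + (↑(ν 2) * radA (Complex.I*kp) ‖y-x‖ * UU x y 2) * hlaminv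
end
end

section
/- Let ω, κ, ε, c be positive real numbers, set q := iω/κ, k_p := ω/c, and C_± := i(1+ε)c² ± (1+i)c√(2ωκ). Assume ωκ + C₋ ≠ 0, and define k₁ := (1/(2c))√(ω/κ)[√(ωκ+C₊) + √(ωκ+C₋)] and k₂ := (1/(2c))√(ω/κ)[√(ωκ+C₊) − √(ωκ+C₋)], where √ denotes the principal complex square root. Then k₁² + k₂² = q(1+ε) + k_p² and k₁² k₂² = q k_p². -/
noncomputable section

open scoped BigOperators

/-!
Write `k₁ = m (a + b)` and `k₂ = m (a - b)` with `m² = ω / (4c²κ)`, `a² = ωκ + C₊` and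
`b² = ωκ + C₋`. Then `k₁² + k₂² = 2m²(a² + b²)` and `k₁²k₂² = m⁴(a² - b²)²`, so the principal
square roots only enter through their squares, and `(C₊ - C₋)² = (2(1 + i)c√(2ωκ))² = 16iωκc²`.
-/

lemma Complex.cpow_one_half_sq (z : ℂ) : (z ^ ((1 : ℂ) / 2)) ^ 2 = z := by
  rw [one_div, Complex.cpow_ofNat_inv_pow]

lemma sq_add_sq_and_sq_mul_sq_of_eq_mul_add_sub {R : Type*} [CommRing R] {k₁ k₂ m a b : R}
    (h₁ : k₁ = m * (a + b)) (h₂ : k₂ = m * (a - b)) :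
    k₁ ^ 2 + k₂ ^ 2 = 2 * m ^ 2 * (a ^ 2 + b ^ 2) ∧
      k₁ ^ 2 * k₂ ^ 2 = (m ^ 2) ^ 2 * (a ^ 2 - b ^ 2) ^ 2 := by
  subst h₁ h₂
  constructor <;> ring

theorem stmt_9_general (ω κ ε c : ℝ) (hω : 0 < ω) (hκ : 0 < κ) (hc : 0 < c)
    (q kp Cp Cm k1 k2 : ℂ)
    (hq : q = Complex.I * (ω : ℂ) / (κ : ℂ))
    (hkp : kp = ((ω / c : ℝ) : ℂ))
    (hCp : Cp = Complex.I * (1 + (ε : ℂ)) * (c : ℂ) ^ 2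
      + (1 + Complex.I) * (c : ℂ) * ((Real.sqrt (2 * ω * κ) : ℝ) : ℂ))
    (hCm : Cm = Complex.I * (1 + (ε : ℂ)) * (c : ℂ) ^ 2
      - (1 + Complex.I) * (c : ℂ) * ((Real.sqrt (2 * ω * κ) : ℝ) : ℂ))
    (hk1 : k1 = ((1 / (2 * c) : ℝ) : ℂ) * (((ω / κ : ℝ) : ℂ) ^ ((1 : ℂ) / 2)) *
      (((((ω * κ : ℝ) : ℂ) + Cp) ^ ((1 : ℂ) / 2))
        + ((((ω * κ : ℝ) : ℂ) + Cm) ^ ((1 : ℂ) / 2))))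
    (hk2 : k2 = ((1 / (2 * c) : ℝ) : ℂ) * (((ω / κ : ℝ) : ℂ) ^ ((1 : ℂ) / 2)) *
      (((((ω * κ : ℝ) : ℂ) + Cp) ^ ((1 : ℂ) / 2))
        - ((((ω * κ : ℝ) : ℂ) + Cm) ^ ((1 : ℂ) / 2)))) :
    k1 ^ 2 + k2 ^ 2 = q * (1 + (ε : ℂ)) + kp ^ 2 ∧
      k1 ^ 2 * k2 ^ 2 = q * kp ^ 2 := by
  have hc0 : (c : ℂ) ≠ 0 := by exact_mod_cast hc.ne'
  have hκ0 : (κ : ℂ) ≠ 0 := by exact_mod_cast hκ.ne'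
  have hm : (((1 / (2 * c) : ℝ) : ℂ) * ((ω / κ : ℝ) : ℂ) ^ ((1 : ℂ) / 2)) ^ 2
      = ω / (4 * c ^ 2 * κ) := by
    rw [mul_pow, Complex.cpow_one_half_sq]; push_cast; field_simp; ring
  have hsqrt : ((√(2 * ω * κ) : ℝ) : ℂ) ^ 2 = 2 * ω * κ := by
    rw [← Complex.ofReal_pow, Real.sq_sqrt (by positivity)]; push_cast; ring
  obtain ⟨hsum, hprod⟩ := sq_add_sq_and_sq_mul_sq_of_eq_mul_add_sub hk1 hk2
  rw [Complex.cpow_one_half_sq, Complex.cpow_one_half_sq, hm] at hsum hprod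
  constructor
  · rw [hsum, hCp, hCm, hq, hkp]; push_cast; field_simp; ring
  · have hdiff : (((ω * κ : ℝ) : ℂ) + Cp - (((ω * κ : ℝ) : ℂ) + Cm)) ^ 2
        = 16 * Complex.I * c ^ 2 * ω * κ := by
      rw [hCp, hCm]
      linear_combination 4 * (c : ℂ) ^ 2 * (1 + Complex.I) ^ 2 * hsqrt
        + 8 * (c : ℂ) ^ 2 * ω * κ * Complex.I_sq
    rw [hprod, hdiff, hq, hkp]; push_cast; field_simp; ring

/-- The explicit wavenumbers `k₁, k₂` of linearized thermoelasticity satisfy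
the characteristic relations `k₁² + k₂² = q(1+ε) + k_p²` and `k₁²k₂² = q k_p²`.
Here `z ^ ((1:ℂ)/2)` is the principal complex square root. -/
theorem stmt_9 (ω κ ε c : ℝ) (hω : 0 < ω) (hκ : 0 < κ) (hε : 0 < ε) (hc : 0 < c)
    (q kp Cp Cm k1 k2 : ℂ)
    (hq : q = Complex.I * (ω : ℂ) / (κ : ℂ))
    (hkp : kp = ((ω / c : ℝ) : ℂ))
    (hCp : Cp = Complex.I * (1 + (ε : ℂ)) * (c : ℂ) ^ 2
      + (1 + Complex.I) * (c : ℂ) * ((Real.sqrt (2 * ω * κ) : ℝ) : ℂ))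
    (hCm : Cm = Complex.I * (1 + (ε : ℂ)) * (c : ℂ) ^ 2
      - (1 + Complex.I) * (c : ℂ) * ((Real.sqrt (2 * ω * κ) : ℝ) : ℂ))
    (hne : ((ω * κ : ℝ) : ℂ) + Cm ≠ 0)
    (hk1 : k1 = ((1 / (2 * c) : ℝ) : ℂ) * (((ω / κ : ℝ) : ℂ) ^ ((1 : ℂ) / 2)) *
      (((((ω * κ : ℝ) : ℂ) + Cp) ^ ((1 : ℂ) / 2))
        + ((((ω * κ : ℝ) : ℂ) + Cm) ^ ((1 : ℂ) / 2))))
    (hk2 : k2 = ((1 / (2 * c) : ℝ) : ℂ) * (((ω / κ : ℝ) : ℂ) ^ ((1 : ℂ) / 2)) *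
      (((((ω * κ : ℝ) : ℂ) + Cp) ^ ((1 : ℂ) / 2))
        - ((((ω * κ : ℝ) : ℂ) + Cm) ^ ((1 : ℂ) / 2)))) :
    k1 ^ 2 + k2 ^ 2 = q * (1 + (ε : ℂ)) + kp ^ 2 ∧
      k1 ^ 2 * k2 ^ 2 = q * kp ^ 2 :=
  stmt_9_general ω κ ε c hω hκ hc q kp Cp Cm k1 k2 hq hkp hCp hCm hk1 hk2
end
end

section
/- For every k ∈ ℂ, every constant vector ν ∈ ℝ³, and every z ≠ y in ℝ³, ∇_z((ν·∇_y)γ_k(z,y)) − M(∂_y,ν)(∇_z γ_k(z,y)) = k² γ_k(z,y) ν, where M(∂_y,ν) acts in the variable y on the vector field y ↦ ∇_z γ_k(z,y) and ∇_z denotes the gradient in z. -/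
noncomputable section

open scoped BigOperators

section HelmholtzAux

open Complex Real
open scoped RealInnerProductSpace

/-- Radial profile of the fundamental solution. -/
def f1 (k : ℂ) (r : ℝ) : ℂ := Complex.exp (Complex.I * k * r) / ((4 * Real.pi * r : ℝ) : ℂ)

/-- Radial profile of the first derivative (divided by the coordinate). -/
def f2 (k : ℂ) (r : ℝ) : ℂ :=
  Complex.exp (Complex.I * k * r) * (Complex.I * k * r - 1) / (4 * (Real.pi : ℂ) * r ^ 3)

/-- Derivative of `f2`. -/
def f2' (k : ℂ) (r : ℝ) : ℂ :=
  -k ^ 2 * Complex.exp (Complex.I * k * r) / (4 * (Real.pi : ℂ) * r ^ 2)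
    - 3 * Complex.exp (Complex.I * k * r) * (Complex.I * k * r - 1) / (4 * (Real.pi : ℂ) * r ^ 4)

theorem gammaK_eq_s10 (k : ℂ) (a b : V3) : gammaK k a b = f1 k ‖a - b‖ := rfl

theorem hasDerivAt_ofReal (r : ℝ) : HasDerivAt (fun t : ℝ => (t : ℂ)) 1 r := by
  simpa using (hasDerivAt_id r).ofReal_comp

theorem hasDerivAt_A (k : ℂ) (r : ℝ) :
    HasDerivAt (fun t : ℝ => Complex.exp (Complex.I * k * t))
      (Complex.exp (Complex.I * k * r) * (Complex.I * k)) r := by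
  have h : HasDerivAt (fun t : ℝ => Complex.I * k * t) (Complex.I * k) r := by
    simpa using (hasDerivAt_ofReal r).const_mul (Complex.I * k)
  simpa using h.cexp

theorem hasDerivAt_f1 (k : ℂ) {r : ℝ} (hr : r ≠ 0) :
    HasDerivAt (f1 k) (f2 k r * r) r := by
  have hπ : (Real.pi : ℂ) ≠ 0 := Complex.ofReal_ne_zero.mpr Real.pi_ne_zero
  have hrc : (r : ℂ) ≠ 0 := Complex.ofReal_ne_zero.mpr hr
  have hden : HasDerivAt (fun t : ℝ => ((4 * Real.pi * t : ℝ) : ℂ)) (4 * (Real.pi : ℂ)) r := by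
    have h : HasDerivAt (fun t : ℝ => (4 * (Real.pi : ℂ)) * (t : ℂ)) (4 * (Real.pi : ℂ)) r := by
      simpa using (hasDerivAt_ofReal r).const_mul (4 * (Real.pi : ℂ))
    have : (fun t : ℝ => (4 * (Real.pi : ℂ)) * (t : ℂ)) = fun t : ℝ => ((4 * Real.pi * t : ℝ) : ℂ) := by
      funext t; push_cast; ring
    rwa [this] at h
  have hd0 : ((4 * Real.pi * r : ℝ) : ℂ) ≠ 0 := by
    push_cast
    simp only [ne_eq, mul_eq_zero]
    push_neg
    exact ⟨⟨by norm_num, hπ⟩, hrc⟩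
  have h := (hasDerivAt_A k r).div hden hd0
  have heq : (Complex.exp (Complex.I * k * r) * (Complex.I * k) * ((4 * Real.pi * r : ℝ) : ℂ)
      - Complex.exp (Complex.I * k * r) * (4 * (Real.pi : ℂ))) / ((4 * Real.pi * r : ℝ) : ℂ) ^ 2
      = f2 k r * r := by
    simp only [f2]
    push_cast
    field_simp
  rw [heq] at h
  exact h

theorem hasDerivAt_f2 (k : ℂ) {r : ℝ} (hr : r ≠ 0) :
    HasDerivAt (f2 k) (f2' k r) r := by
  have hπ : (Real.pi : ℂ) ≠ 0 := Complex.ofReal_ne_zero.mpr Real.pi_ne_zero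
  have hrc : (r : ℂ) ≠ 0 := Complex.ofReal_ne_zero.mpr hr
  have hN : HasDerivAt (fun t : ℝ => Complex.exp (Complex.I * k * t) * (Complex.I * k * t - 1))
      (Complex.exp (Complex.I * k * r) * (Complex.I * k) * (Complex.I * k * r - 1)
        + Complex.exp (Complex.I * k * r) * (Complex.I * k)) r := by
    have h2 : HasDerivAt (fun t : ℝ => Complex.I * k * t - 1) (Complex.I * k) r := by
      simpa using ((hasDerivAt_ofReal r).const_mul (Complex.I * k)).sub_const 1
    simpa using (hasDerivAt_A k r).fun_mul h2
  have hD : HasDerivAt (fun t : ℝ => 4 * (Real.pi : ℂ) * (t : ℂ) ^ 3)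
      (4 * (Real.pi : ℂ) * (3 * (r : ℂ) ^ 2)) r := by
    have h := ((hasDerivAt_ofReal r).fun_mul ((hasDerivAt_ofReal r).fun_mul (hasDerivAt_ofReal r))).const_mul
      (4 * (Real.pi : ℂ))
    have hfun : (fun t : ℝ => 4 * (Real.pi : ℂ) * ((t : ℂ) * ((t : ℂ) * (t : ℂ))))
        = (fun t : ℝ => 4 * (Real.pi : ℂ) * (t : ℂ) ^ 3) := by funext t; ring
    rw [hfun] at h
    refine h.congr_deriv ?_
    ring
  have hD0 : 4 * (Real.pi : ℂ) * (r : ℂ) ^ 3 ≠ 0 := by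
    simp only [ne_eq, mul_eq_zero]
    push_neg
    exact ⟨⟨by norm_num, hπ⟩, pow_ne_zero 3 hrc⟩
  have h := hN.div hD hD0
  have heq : ((Complex.exp (Complex.I * k * r) * (Complex.I * k) * (Complex.I * k * r - 1)
        + Complex.exp (Complex.I * k * r) * (Complex.I * k)) * (4 * (Real.pi : ℂ) * (r : ℂ) ^ 3)
      - Complex.exp (Complex.I * k * r) * (Complex.I * k * r - 1) * (4 * (Real.pi : ℂ) * (3 * (r : ℂ) ^ 2)))
      / (4 * (Real.pi : ℂ) * (r : ℂ) ^ 3) ^ 2 = f2' k r := by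
    simp only [f2']
    field_simp
    ring_nf
    simp only [Complex.I_sq]
    ring
  rw [heq] at h
  exact h

theorem key_alg (k : ℂ) {r : ℝ} (hr : r ≠ 0) :
    f2' k r * r + 3 * f2 k r = -(k ^ 2) * f1 k r := by
  have hπ : (Real.pi : ℂ) ≠ 0 := Complex.ofReal_ne_zero.mpr Real.pi_ne_zero
  have hrc : (r : ℂ) ≠ 0 := Complex.ofReal_ne_zero.mpr hr
  simp only [f1, f2, f2']
  push_cast
  rw [← sub_eq_zero]
  field_simp
  ring_nf

theorem hasFDerivAt_norm3 {x : V3} (hx : x ≠ 0) :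
    HasFDerivAt (fun v : V3 => ‖v‖) ((‖x‖⁻¹ : ℝ) • (innerSL ℝ x)) x := by
  have hn : ‖x‖ ≠ 0 := norm_ne_zero_iff.mpr hx
  have hs : (⟪x, x⟫ : ℝ) ≠ 0 := by
    rw [real_inner_self_eq_norm_sq]; exact pow_ne_zero 2 hn
  have hinner : HasFDerivAt (fun v : V3 => ⟪v, v⟫)
      ((fderivInnerCLM ℝ (x, x)).comp ((ContinuousLinearMap.id ℝ V3).prod (ContinuousLinearMap.id ℝ V3))) x :=
    (hasFDerivAt_id x).inner ℝ (hasFDerivAt_id x)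
  have h := (Real.hasDerivAt_sqrt hs).comp_hasFDerivAt_of_eq x hinner rfl
  have hfun : (Real.sqrt ∘ fun v : V3 => ⟪v, v⟫) = fun v : V3 => ‖v‖ := by
    funext v
    simp only [Function.comp, real_inner_self_eq_norm_sq]
    exact Real.sqrt_sq (norm_nonneg v)
  rw [hfun] at h
  refine h.congr_fderiv ?_
  ext v
  simp only [ContinuousLinearMap.smul_apply, innerSL_apply_apply, smul_eq_mul,
    ContinuousLinearMap.comp_apply, ContinuousLinearMap.prod_apply,
    ContinuousLinearMap.coe_id', id_eq, fderivInnerCLM_apply,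
    real_inner_self_eq_norm_sq, Real.sqrt_sq (norm_nonneg x)]
  rw [real_inner_comm v x]
  field_simp
  ring

/-- The gradient CLM of the radial function. -/
def Dg (k : ℂ) (x : V3) : V3 →L[ℝ] ℂ := (innerSL ℝ x).smulRight (f2 k ‖x‖)

theorem Dg_apply (k : ℂ) (x : V3) (v : V3) : Dg k x v = (⟪x, v⟫ : ℂ) * f2 k ‖x‖ := by
  simp [Dg, Complex.real_smul]

theorem hasFDerivAt_g (k : ℂ) {x : V3} (hx : x ≠ 0) :
    HasFDerivAt (fun v : V3 => f1 k ‖v‖) (Dg k x) x := by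
  have hr : ‖x‖ ≠ 0 := norm_ne_zero_iff.mpr hx
  have hO : HasFDerivAt (f1 k) ((1 : ℝ →L[ℝ] ℝ).smulRight (f2 k ‖x‖ * ‖x‖)) (‖x‖) :=
    (hasDerivAt_f1 k hr).hasFDerivAt
  have h := hO.comp x (hasFDerivAt_norm3 hx)
  have hfun : (f1 k ∘ fun v : V3 => ‖v‖) = fun v : V3 => f1 k ‖v‖ := rfl
  rw [hfun] at h
  refine h.congr_fderiv ?_
  ext v
  have hc : (‖x‖ : ℂ) ≠ 0 := Complex.ofReal_ne_zero.mpr hr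
  simp [Dg, Complex.real_smul]
  field_simp

/-- First partial derivative of the radial function, as a function. -/
def G (k : ℂ) (j : Fin 3) (v : V3) : ℂ := f2 k ‖v‖ * ((v j : ℝ) : ℂ)

/-- The `j`-th complex coordinate functional. -/
def coordC (j : Fin 3) : V3 →L[ℝ] ℂ :=
  Complex.ofRealCLM.comp (innerSL ℝ (EuclideanSpace.single j (1 : ℝ)))

theorem coordC_apply (j : Fin 3) (v : V3) : coordC j v = ((v j : ℝ) : ℂ) := by
  simp [coordC, EuclideanSpace.inner_single_left]

/-- The gradient CLM of `G`. -/
def DG (k : ℂ) (j : Fin 3) (x : V3) : V3 →L[ℝ] ℂ :=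
  (innerSL ℝ x).smulRight (f2' k ‖x‖ * ((‖x‖ : ℂ))⁻¹ * ((x j : ℝ) : ℂ)) + (f2 k ‖x‖) • coordC j

theorem DG_apply (k : ℂ) (j : Fin 3) (x : V3) (v : V3) :
    DG k j x v = f2' k ‖x‖ * ((‖x‖ : ℂ))⁻¹ * ((x j : ℝ) : ℂ) * ((⟪x, v⟫ : ℝ) : ℂ)
      + f2 k ‖x‖ * ((v j : ℝ) : ℂ) := by
  simp [DG, coordC_apply, Complex.real_smul]
  ring

theorem hasFDerivAt_G (k : ℂ) (j : Fin 3) {x : V3} (hx : x ≠ 0) :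
    HasFDerivAt (G k j) (DG k j x) x := by
  have hr : ‖x‖ ≠ 0 := norm_ne_zero_iff.mpr hx
  have hc : (‖x‖ : ℂ) ≠ 0 := Complex.ofReal_ne_zero.mpr hr
  have hO : HasFDerivAt (f2 k) ((1 : ℝ →L[ℝ] ℝ).smulRight (f2' k ‖x‖)) (‖x‖) :=
    (hasDerivAt_f2 k hr).hasFDerivAt
  have h1 : HasFDerivAt (fun v : V3 => f2 k ‖v‖)
      (((1 : ℝ →L[ℝ] ℝ).smulRight (f2' k ‖x‖)).comp ((‖x‖⁻¹ : ℝ) • (innerSL ℝ x))) x :=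
    hO.comp x (hasFDerivAt_norm3 hx)
  have h2 : HasFDerivAt (fun v : V3 => ((v j : ℝ) : ℂ)) (coordC j) x := by
    have := (coordC j).hasFDerivAt (x := x)
    convert this using 1
    funext v
    rw [coordC_apply]
  have h := h1.fun_mul h2
  have hfun : (fun v : V3 => f2 k ‖v‖ * ((v j : ℝ) : ℂ)) = G k j := rfl
  rw [hfun] at h
  refine h.congr_fderiv ?_
  ext v
  rw [DG_apply]
  change f2 k ‖x‖ * coordC j v + ((x j : ℝ) : ℂ) * ((‖x‖⁻¹ * ⟪x, v⟫ : ℝ) • f2' k ‖x‖) = _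
  rw [coordC_apply, Complex.real_smul]
  push_cast
  field_simp
  ring

theorem pd_eval {f : V3 → ℂ} {D : V3 →L[ℝ] ℂ} {x : V3} (h : HasFDerivAt f D x) (i : Fin 3) :
    pd i f x = D (EuclideanSpace.single i 1) := by rw [pd, h.fderiv]

theorem hasFDerivAt_gamma_z (k : ℂ) (b : V3) {a : V3} (hab : a ≠ b) :
    HasFDerivAt (fun z' : V3 => gammaK k z' b) (Dg k (a - b)) a := by
  have hsub : HasFDerivAt (fun z' : V3 => z' - b) (ContinuousLinearMap.id ℝ V3) a :=
    (hasFDerivAt_id a).sub_const b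
  have h := (hasFDerivAt_g k (sub_ne_zero.mpr hab)).comp a hsub
  simpa [Function.comp_def, gammaK_eq_s10] using h

theorem hasFDerivAt_gamma_y (k : ℂ) (a : V3) {b : V3} (hab : a ≠ b) :
    HasFDerivAt (fun y' : V3 => gammaK k a y') (-(Dg k (a - b))) b := by
  have hsub : HasFDerivAt (fun y' : V3 => a - y') (-(ContinuousLinearMap.id ℝ V3)) b :=
    (hasFDerivAt_id b).const_sub a
  have h := (hasFDerivAt_g k (sub_ne_zero.mpr hab)).comp b hsub
  simpa [Function.comp_def, gammaK_eq_s10] using h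

theorem hasFDerivAt_G_z (k : ℂ) (j : Fin 3) (b : V3) {a : V3} (hab : a ≠ b) :
    HasFDerivAt (fun z' : V3 => G k j (z' - b)) (DG k j (a - b)) a := by
  have hsub : HasFDerivAt (fun z' : V3 => z' - b) (ContinuousLinearMap.id ℝ V3) a :=
    (hasFDerivAt_id a).sub_const b
  have h := (hasFDerivAt_G k j (sub_ne_zero.mpr hab)).comp a hsub
  simpa [Function.comp_def] using h

theorem hasFDerivAt_G_y (k : ℂ) (j : Fin 3) (a : V3) {b : V3} (hab : a ≠ b) :
    HasFDerivAt (fun y' : V3 => G k j (a - y')) (-(DG k j (a - b))) b := by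
  have hsub : HasFDerivAt (fun y' : V3 => a - y') (-(ContinuousLinearMap.id ℝ V3)) b :=
    (hasFDerivAt_id b).const_sub a
  have h := (hasFDerivAt_G k j (sub_ne_zero.mpr hab)).comp b hsub
  simpa [Function.comp_def] using h

theorem pd_gamma_y (k : ℂ) (j : Fin 3) {a b : V3} (hab : a ≠ b) :
    pd j (fun y' : V3 => gammaK k a y') b = -(G k j (a - b)) := by
  rw [pd_eval (hasFDerivAt_gamma_y k a hab) j]
  simp [Dg_apply, G, EuclideanSpace.inner_single_right]
  ring

theorem pd_gamma_z (k : ℂ) (j : Fin 3) {a b : V3} (hab : a ≠ b) :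
    pd j (fun z' : V3 => gammaK k z' b) a = G k j (a - b) := by
  rw [pd_eval (hasFDerivAt_gamma_z k b hab) j]
  simp [Dg_apply, G, EuclideanSpace.inner_single_right]
  ring

end HelmholtzAux

/-- `∇_z((ν·∇_y)γ_k(z,y)) − M(∂_y,ν)(∇_z γ_k(z,y)) = k² γ_k(z,y) ν`
for `z ≠ y`, stated componentwise. -/
theorem stmt_10 (k : ℂ) (ν : Fin 3 → ℝ) (z y : V3) (hzy : z ≠ y) (i : Fin 3) :
    pd i (fun z' => dirD ν (fun y' => gammaK k z' y') y) z
      - gunterM ν (fun j => fun y' => pd j (fun z' => gammaK k z' y') z) i y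
      = k ^ 2 * gammaK k z y * (ν i : ℂ) := by
  have hw0 : z - y ≠ 0 := sub_ne_zero.mpr hzy
  have hr : ‖z - y‖ ≠ 0 := norm_ne_zero_iff.mpr hw0
  have hrc : ((‖z - y‖ : ℝ) : ℂ) ≠ 0 := Complex.ofReal_ne_zero.mpr hr
  have hEv1 : (fun z' => dirD ν (fun y' => gammaK k z' y') y) =ᶠ[nhds z]
      (fun z' => ∑ j, (ν j : ℂ) * (-(G k j (z' - y)))) := by
    filter_upwards [eventually_ne_nhds hzy] with z' hz'
    simp only [dirD]
    exact Finset.sum_congr rfl fun j _ => by rw [pd_gamma_y k j hz']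
  have hT1fd : HasFDerivAt (fun z' : V3 => ∑ j, (ν j : ℂ) * (-(G k j (z' - y))))
      (∑ j, (ν j : ℂ) • (-(DG k j (z - y)))) z := by
    apply HasFDerivAt.fun_sum
    intro j _
    exact ((hasFDerivAt_G_z k j y hzy).neg).const_mul ((ν j : ℂ))
  have hT1 : pd i (fun z' => dirD ν (fun y' => gammaK k z' y') y) z
      = ∑ j, (ν j : ℂ) * (-(DG k j (z - y) (EuclideanSpace.single i 1))) := by
    rw [pd, hEv1.fderiv_eq, ← pd, pd_eval hT1fd i]
    simp
  have hX : ∀ j a : Fin 3, pd a (fun y' => pd j (fun z' => gammaK k z' y') z) y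
      = -(DG k j (z - y) (EuclideanSpace.single a 1)) := by
    intro j a
    have hEv : (fun y' => pd j (fun z' => gammaK k z' y') z) =ᶠ[nhds y]
        (fun y' => G k j (z - y')) := by
      filter_upwards [eventually_ne_nhds (Ne.symm hzy)] with y' hy'
      exact pd_gamma_z k j (Ne.symm hy')
    rw [pd, hEv.fderiv_eq, ← pd, pd_eval (hasFDerivAt_G_y k j z hzy) a]
    simp
  simp only [gunterM, hT1, hX]
  rw [gammaK_eq_s10]
  rw [Fin.sum_univ_three, Fin.sum_univ_three]
  simp only [DG_apply, EuclideanSpace.inner_single_right, EuclideanSpace.single_apply]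
  norm_num
  have hsub : ∀ a : Fin 3, (z - y) a = z a - y a := fun a => rfl
  have hreal : (z - y) 0 * (z - y) 0 + (z - y) 1 * (z - y) 1 + (z - y) 2 * (z - y) 2
      = ‖z - y‖ ^ 2 := by
    rw [EuclideanSpace.norm_eq, Real.sq_sqrt (by positivity)]
    simp [Fin.sum_univ_three, sq]
  have hw2 : ((z 0 : ℂ) - (y 0 : ℂ)) ^ 2 + ((z 1 : ℂ) - (y 1 : ℂ)) ^ 2 + ((z 2 : ℂ) - (y 2 : ℂ)) ^ 2
      = ((‖z - y‖ : ℝ) : ℂ) ^ 2 := by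
    simp only [hsub] at hreal
    have := congrArg (fun t : ℝ => (t : ℂ)) hreal
    push_cast at this
    rw [← this]
    ring
  have hrr : (((‖z - y‖ : ℝ) : ℂ))⁻¹ * (((‖z - y‖ : ℝ) : ℂ)) ^ 2 = ((‖z - y‖ : ℝ) : ℂ) := by
    field_simp
  linear_combination (-(ν i : ℂ) * (f2' k ‖z - y‖ * (((‖z - y‖ : ℝ) : ℂ))⁻¹)) * hw2
    + (-(ν i : ℂ) * f2' k ‖z - y‖) * hrr + (-(ν i : ℂ)) * (key_alg k hr)
end
end

section
/- Let f : ℝ³ → ℂ be twice continuously differentiable, let ν_x, ν_y ∈ ℝ³ be constant vectors, and set F(z,y) := f(z−y) for z,y ∈ ℝ³. Then for all i,j ∈ {1,2,3} and all (z,y), Σ_{l=1}^3 [ m^{il}(∂_y,ν_y) m^{lj}(∂_z,ν_x) − m^{il}(∂_z,ν_x) m^{lj}(∂_y,ν_y) ] F = (ν_y^i ν_x^j − ν_x^i ν_y^j) Δ_z F + m^{ij}(∂_z,ν_x)((ν_y·∇_y)F) − m^{ij}(∂_y,ν_y)((ν_x·∇_z)F), where m^{ij}(∂_z,ν) := ν^j∂_{z_i}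 − ν^i∂_{z_j} acts in z and m^{ij}(∂_y,ν) := ν^j∂_{y_i} − ν^i∂_{y_j} acts in y. -/
noncomputable section

open scoped BigOperators

/-- Günter-type entry operator acting in the first (`z`) variable of a
two-variable function. -/
def mzOp (ν : Fin 3 → ℝ) (i j : Fin 3) (F : V3 → V3 → ℂ) : V3 → V3 → ℂ :=
  fun z y => (ν j : ℂ) * pd i (fun z' => F z' y) z - (ν i : ℂ) * pd j (fun z' => F z' y) z

/-- Günter-type entry operator acting in the second (`y`) variable of a
two-variable function. -/
def myOp (ν : Fin 3 → ℝ) (i j : Fin 3) (F : V3 → V3 → ℂ) : V3 → V3 → ℂ :=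
  fun z y => (ν j : ℂ) * pd i (fun y' => F z y') y - (ν i : ℂ) * pd j (fun y' => F z y') y

/-- Chain rule for `pd` through a right translation. -/
lemma pd_comp_sub (w : V3 → ℂ) (y z : V3) (l : Fin 3) (hw : DifferentiableAt ℝ w (z - y)) :
    pd l (fun z' => w (z' - y)) z = pd l w (z - y) := by
  have h : HasFDerivAt (fun z' : V3 => w (z' - y))
      ((fderiv ℝ w (z - y)).comp (ContinuousLinearMap.id ℝ V3)) z :=
    hw.hasFDerivAt.comp z (hasFDerivAt_sub_const y)
  simp only [pd, h.fderiv]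
  simp

/-- Chain rule for `pd` through a reflected translation. -/
lemma pd_comp_const_sub (w : V3 → ℂ) (z y : V3) (l : Fin 3)
    (hw : DifferentiableAt ℝ w (z - y)) :
    pd l (fun y' => w (z - y')) y = -pd l w (z - y) := by
  have h1 : HasFDerivAt (fun y' : V3 => z - y') (-(ContinuousLinearMap.id ℝ V3)) y := by
    simpa using (hasFDerivAt_id y).const_sub z
  have h : HasFDerivAt (fun y' : V3 => w (z - y'))
      ((fderiv ℝ w (z - y)).comp (-(ContinuousLinearMap.id ℝ V3))) y :=
    hw.hasFDerivAt.comp y h1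
  simp only [pd, h.fderiv]
  simp

/-- Linearity of `pd` on `a•u − b•v`. -/
lemma pd_mul_sub {a b : ℂ} {u v : V3 → ℂ} {x : V3} {p : Fin 3}
    (hu : DifferentiableAt ℝ u x) (hv : DifferentiableAt ℝ v x) :
    pd p (fun t => a * u t - b * v t) x = a * pd p u x - b * pd p v x := by
  simp only [pd]
  rw [fderiv_fun_sub ((hu.const_mul a)) ((hv.const_mul b)), fderiv_const_mul hu,
    fderiv_const_mul hv]
  simp

/-- Linearity of `pd` on finite sums with constant coefficients. -/
lemma pd_sum {c : Fin 3 → ℂ} {u : Fin 3 → V3 → ℂ} {x : V3} {p : Fin 3}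
    (hu : ∀ m, DifferentiableAt ℝ (u m) x) :
    pd p (fun t => ∑ m, c m * u m t) x = ∑ m, c m * pd p (u m) x := by
  simp only [pd]
  rw [fderiv_fun_sum (fun m _ => (hu m).const_mul (c m))]
  rw [ContinuousLinearMap.sum_apply]
  refine Finset.sum_congr rfl fun m _ => ?_
  rw [fderiv_const_mul (hu m)]
  simp

/-- Commutator identity for mixed Günter derivatives of `F(z,y) = f(z−y)`:
`Σ_l [m^{il}(∂_y,ν_y) m^{lj}(∂_z,ν_x) − m^{il}(∂_z,ν_x) m^{lj}(∂_y,ν_y)]F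
= (ν_y^i ν_x^j − ν_x^i ν_y^j)Δ_z F + m^{ij}(∂_z,ν_x)((ν_y·∇_y)F)
− m^{ij}(∂_y,ν_y)((ν_x·∇_z)F)`. -/
theorem stmt_11 (f : V3 → ℂ) (hf : ContDiff ℝ 2 f) (νx νy : Fin 3 → ℝ)
    (i j : Fin 3) (z y : V3) :
    (∑ l, (myOp νy i l (mzOp νx l j (fun z' y' => f (z' - y'))) z y
        - mzOp νx i l (myOp νy l j (fun z' y' => f (z' - y'))) z y))
      = ((νy i : ℂ) * (νx j : ℂ) - (νx i : ℂ) * (νy j : ℂ)) *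
          lap (fun z' => f (z' - y)) z
        + mzOp νx i j (fun z' y' => dirD νy (fun w => f (z' - w)) y') z y
        - myOp νy i j (fun z' y' => dirD νx (fun w => f (w - y')) z') z y := by
  have hf1 : Differentiable ℝ f := hf.differentiable two_ne_zero
  have hf' : ContDiff ℝ 1 (fderiv ℝ f) := hf.fderiv_right (by norm_num)
  have hgc : ∀ m : Fin 3, ContDiff ℝ 1 (pd m f) := fun m => hf'.clm_apply contDiff_const
  have hgd : ∀ (m : Fin 3) (x : V3), DifferentiableAt ℝ (pd m f) x :=
    fun m x => (hgc m).differentiable one_ne_zero x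
  have hz0 : ∀ (l : Fin 3) (z' y' : V3), pd l (fun t => f (t - y')) z' = pd l f (z' - y') :=
    fun l z' y' => pd_comp_sub f y' z' l (hf1 _)
  have hy0 : ∀ (l : Fin 3) (z' y' : V3), pd l (fun t => f (z' - t)) y' = -pd l f (z' - y') :=
    fun l z' y' => pd_comp_const_sub f z' y' l (hf1 _)
  have hz1 : ∀ (p q : Fin 3) (z' y' : V3),
      pd p (fun t => pd q f (t - y')) z' = pd p (pd q f) (z' - y') :=
    fun p q z' y' => pd_comp_sub (pd q f) y' z' p (hgd q _)
  have hy1 : ∀ (p q : Fin 3) (z' y' : V3),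
      pd p (fun t => pd q f (z' - t)) y' = -pd p (pd q f) (z' - y') :=
    fun p q z' y' => pd_comp_const_sub (pd q f) z' y' p (hgd q _)
  have hDz : ∀ (q : Fin 3) (y' z' : V3), DifferentiableAt ℝ (fun t => pd q f (t - y')) z' :=
    fun q y' z' => (hgd q _).comp z' (differentiableAt_id.sub_const y')
  have hDy : ∀ (q : Fin 3) (z' y' : V3), DifferentiableAt ℝ (fun t => pd q f (z' - t)) y' :=
    fun q z' y' => (hgd q _).comp y' (differentiableAt_id.const_sub z')
  have hsymm : ∀ p q : Fin 3, pd p (pd q f) (z - y) = pd q (pd p f) (z - y) := by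
    intro p q
    have hd2 : DifferentiableAt ℝ (fderiv ℝ f) (z - y) := hf'.differentiable one_ne_zero (z - y)
    have key := second_derivative_symmetric (f' := fderiv ℝ f)
      (fun t => (hf1 t).hasFDerivAt) hd2.hasFDerivAt
      (EuclideanSpace.single p (1 : ℝ)) (EuclideanSpace.single q (1 : ℝ))
    have expr : ∀ a b : Fin 3, pd a (pd b f) (z - y)
        = fderiv ℝ (fderiv ℝ f) (z - y) (EuclideanSpace.single a (1 : ℝ))
            (EuclideanSpace.single b (1 : ℝ)) := by
      intro a b
      have hcomp : HasFDerivAt (pd b f)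
          ((ContinuousLinearMap.apply ℝ ℂ (EuclideanSpace.single b (1 : ℝ))).comp
            (fderiv ℝ (fderiv ℝ f) (z - y))) (z - y) :=
        (ContinuousLinearMap.apply ℝ ℂ (EuclideanSpace.single b (1 : ℝ))).hasFDerivAt.comp _ hd2.hasFDerivAt
      show fderiv ℝ (pd b f) (z - y) (EuclideanSpace.single a (1 : ℝ)) = _
      rw [hcomp.fderiv]
      rfl
    rw [expr, expr, key]
  have L1 : ∀ l : Fin 3, myOp νy i l (mzOp νx l j (fun z' y' => f (z' - y'))) z y
      = (νy l : ℂ) * ((νx j : ℂ) * -pd i (pd l f) (z - y)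
          - (νx l : ℂ) * -pd i (pd j f) (z - y))
        - (νy i : ℂ) * ((νx j : ℂ) * -pd l (pd l f) (z - y)
          - (νx l : ℂ) * -pd l (pd j f) (z - y)) := by
    intro l
    have hfun : (fun y' => mzOp νx l j (fun z' y' => f (z' - y')) z y')
        = fun y' => (νx j : ℂ) * pd l f (z - y') - (νx l : ℂ) * pd j f (z - y') := by
      funext y'
      simp only [mzOp]
      rw [hz0, hz0]
    simp only [myOp, hfun]
    rw [pd_mul_sub (hDy l z y) (hDy j z y), pd_mul_sub (hDy l z y) (hDy j z y),
      hy1, hy1, hy1, hy1]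
  have L2 : ∀ l : Fin 3, mzOp νx i l (myOp νy l j (fun z' y' => f (z' - y'))) z y
      = (νx l : ℂ) * ((-(νy j : ℂ)) * pd i (pd l f) (z - y)
          - (-(νy l : ℂ)) * pd i (pd j f) (z - y))
        - (νx i : ℂ) * ((-(νy j : ℂ)) * pd l (pd l f) (z - y)
          - (-(νy l : ℂ)) * pd l (pd j f) (z - y)) := by
    intro l
    have hfun : (fun z' => myOp νy l j (fun z' y' => f (z' - y')) z' y)
        = fun z' => (-(νy j : ℂ)) * pd l f (z' - y) - (-(νy l : ℂ)) * pd j f (z' - y) := by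
      funext z'
      simp only [myOp]
      rw [hy0, hy0]
      ring
    simp only [mzOp, hfun]
    rw [pd_mul_sub (hDz l y z) (hDz j y z), pd_mul_sub (hDz l y z) (hDz j y z),
      hz1, hz1, hz1, hz1]
  have hlap : lap (fun z' => f (z' - y)) z = ∑ l, pd l (pd l f) (z - y) := by
    simp only [lap]
    refine Finset.sum_congr rfl fun l _ => ?_
    have hfun : pd l (fun z' => f (z' - y)) = fun t => pd l f (t - y) :=
      funext fun t => hz0 l t y
    rw [hfun, hz1]
  have hR2 : mzOp νx i j (fun z' y' => dirD νy (fun w => f (z' - w)) y') z y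
      = (νx j : ℂ) * (∑ m, (-(νy m : ℂ)) * pd i (pd m f) (z - y))
        - (νx i : ℂ) * (∑ m, (-(νy m : ℂ)) * pd j (pd m f) (z - y)) := by
    have hfun : (fun z' => dirD νy (fun w => f (z' - w)) y)
        = fun z' => ∑ m, (-(νy m : ℂ)) * pd m f (z' - y) := by
      funext z'
      simp only [dirD]
      refine Finset.sum_congr rfl fun m _ => ?_
      rw [hy0]
      ring
    simp only [mzOp, hfun]
    rw [pd_sum (fun m => hDz m y z), pd_sum (fun m => hDz m y z)]
    simp only [hz1]
  have hR3 : myOp νy i j (fun z' y' => dirD νx (fun w => f (w - y')) z') z y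
      = (νy j : ℂ) * (∑ m, (νx m : ℂ) * -pd i (pd m f) (z - y))
        - (νy i : ℂ) * (∑ m, (νx m : ℂ) * -pd j (pd m f) (z - y)) := by
    have hfun : (fun y' => dirD νx (fun w => f (w - y')) z)
        = fun y' => ∑ m, (νx m : ℂ) * pd m f (z - y') := by
      funext y'
      simp only [dirD]
      exact Finset.sum_congr rfl fun m _ => by rw [hz0]
    simp only [myOp, hfun]
    rw [pd_sum (fun m => hDy m z y), pd_sum (fun m => hDy m z y)]
    simp only [hy1]
  rw [hlap, hR2, hR3]
  simp only [L1, L2, Fin.sum_univ_three]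
  linear_combination ((νx i : ℂ) * (νy 0 : ℂ) - (νy i : ℂ) * (νx 0 : ℂ)) * hsymm 0 j
    + ((νx i : ℂ) * (νy 1 : ℂ) - (νy i : ℂ) * (νx 1 : ℂ)) * hsymm 1 j
    + ((νx i : ℂ) * (νy 2 : ℂ) - (νy i : ℂ) * (νx 2 : ℂ)) * hsymm 2 j
end
end

section
/- Assume k₁² ≠ k₂². Then for every x ≠ y in ℝ³ and every constant vector ν ∈ ℝ³, T(∂_x,ν)E₁₂(x,y) = (γ/(k₁²−k₂²)) ν (k₁²γ_{k₁}(x,y) − k₂²γ_{k₂}(x,y)) − (2μγ/((k₁²−k₂²)(λ+2μ))) M(∂_x,ν)(∇_x[γ_{k₁}−γ_{k₂}])(x,y). -/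
noncomputable section

open scoped BigOperators

/-- radial profile of gammaK -/
def g0 (k : ℂ) (t : ℝ) : ℂ :=
  Complex.exp (Complex.I * k * (t : ℂ)) / ((4 * Real.pi * t : ℝ) : ℂ)

def g1 (k : ℂ) (t : ℝ) : ℂ :=
  Complex.exp (Complex.I * k * (t : ℂ)) * (Complex.I * k * (t : ℂ) - 1) / (4 * (Real.pi : ℂ) * (t : ℂ) ^ 3)

def g2 (k : ℂ) (t : ℝ) : ℂ :=
  Complex.exp (Complex.I * k * (t : ℂ)) * (-(k ^ 2) * (t : ℂ) ^ 2 - 3 * Complex.I * k * (t : ℂ) + 3) /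
    (4 * (Real.pi : ℂ) * (t : ℂ) ^ 4)

lemma piC_ne : ((Real.pi : ℂ)) ≠ 0 := by
  exact_mod_cast Real.pi_ne_zero

lemma hasDerivAt_g0 (k : ℂ) {t : ℝ} (ht : t ≠ 0) : HasDerivAt (g0 k) (g1 k t * t) t := by
  have htC : (t : ℂ) ≠ 0 := by exact_mod_cast ht
  have hfun : g0 k = fun s : ℝ =>
      Complex.exp (Complex.I * k * (s : ℂ)) / (4 * (Real.pi : ℂ) * (s : ℂ)) := by
    funext s; simp only [g0]; push_cast; ring_nf
  rw [hfun]
  have hnum : HasDerivAt (fun w : ℂ => Complex.exp (Complex.I * k * w))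
      (Complex.exp (Complex.I * k * (t : ℂ)) * (Complex.I * k)) (t : ℂ) := by
    simpa using ((hasDerivAt_id ((t : ℝ) : ℂ)).const_mul (Complex.I * k)).cexp
  have hden : HasDerivAt (fun w : ℂ => 4 * (Real.pi : ℂ) * w) (4 * (Real.pi : ℂ)) (t : ℂ) := by
    simpa using (hasDerivAt_id ((t : ℝ) : ℂ)).const_mul (4 * (Real.pi : ℂ))
  have hden0 : 4 * (Real.pi : ℂ) * (t : ℂ) ≠ 0 := by
    simp [Real.pi_ne_zero, htC]
  have h := (hnum.div hden hden0).comp_ofReal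
  convert h using 1
  · rfl
  rw [g1]
  field_simp [htC, piC_ne]

lemma hasDerivAt_g1 (k : ℂ) {t : ℝ} (ht : t ≠ 0) : HasDerivAt (g1 k) (g2 k t) t := by
  have htC : (t : ℂ) ≠ 0 := by exact_mod_cast ht
  have hnum : HasDerivAt (fun w : ℂ => Complex.exp (Complex.I * k * w) * (Complex.I * k * w - 1))
      (Complex.exp (Complex.I * k * (t : ℂ)) * (Complex.I * k) * (Complex.I * k * (t : ℂ) - 1)
        + Complex.exp (Complex.I * k * (t : ℂ)) * (Complex.I * k)) (t : ℂ) := by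
    have h1 : HasDerivAt (fun w : ℂ => Complex.exp (Complex.I * k * w))
        (Complex.exp (Complex.I * k * (t : ℂ)) * (Complex.I * k)) (t : ℂ) := by
      simpa using ((hasDerivAt_id ((t : ℝ) : ℂ)).const_mul (Complex.I * k)).cexp
    have h2 : HasDerivAt (fun w : ℂ => Complex.I * k * w - 1) (Complex.I * k) (t : ℂ) := by
      simpa using ((hasDerivAt_id ((t : ℝ) : ℂ)).const_mul (Complex.I * k)).sub_const 1
    exact h1.mul h2
  have hden : HasDerivAt (fun w : ℂ => 4 * (Real.pi : ℂ) * w ^ 3)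
      (4 * (Real.pi : ℂ) * (3 * (t : ℂ) ^ 2)) (t : ℂ) := by
    simpa using (hasDerivAt_pow 3 ((t : ℝ) : ℂ)).const_mul (4 * (Real.pi : ℂ))
  have hden0 : 4 * (Real.pi : ℂ) * (t : ℂ) ^ 3 ≠ 0 := by
    simp [Real.pi_ne_zero, htC]
  have h := (hnum.div hden hden0).comp_ofReal
  have hfun : g1 k = fun s : ℝ => ((fun w : ℂ => Complex.exp (Complex.I * k * w) * (Complex.I * k * w - 1))
      ((s : ℝ) : ℂ)) / ((fun w : ℂ => 4 * (Real.pi : ℂ) * w ^ 3) ((s : ℝ) : ℂ)) := by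
    funext s; simp only [g1]
  rw [hfun]
  convert h using 1
  · rfl
  rw [g2]
  field_simp [htC, piC_ne]
  ring_nf
  simp [Complex.I_sq]
  ring_nf

lemma lap_id (k : ℂ) {t : ℝ} (ht : t ≠ 0) :
    g2 k t * (t : ℂ) + 3 * g1 k t = -(k ^ 2 * g0 k t) := by
  have htC : (t : ℂ) ≠ 0 := by exact_mod_cast ht
  rw [g0, g1, g2]
  have : ((4 * Real.pi * t : ℝ) : ℂ) = 4 * (Real.pi : ℂ) * (t : ℂ) := by push_cast; ring
  rw [this]
  field_simp [htC, piC_ne]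
  ring

lemma hasFDerivAt_norm_sub (y : V3) {z : V3} (hz : z ≠ y) :
    HasFDerivAt (fun w : V3 => ‖w - y‖) ((‖z - y‖)⁻¹ • (innerSL ℝ (z - y))) z := by
  have hn0 : ‖z - y‖ ≠ 0 := norm_ne_zero_iff.mpr (sub_ne_zero.mpr hz)
  have hsub : HasFDerivAt (fun w : V3 => w - y) (ContinuousLinearMap.id ℝ V3) z :=
    (hasFDerivAt_id z).sub_const y
  have hsq := hsub.norm_sq
  have h0 : ‖z - y‖ ^ 2 ≠ 0 := pow_ne_zero _ hn0
  have hsqrt := (Real.hasDerivAt_sqrt h0).comp_hasFDerivAt z hsq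
  have hfun : (Real.sqrt ∘ fun w : V3 => ‖w - y‖ ^ 2) = fun w : V3 => ‖w - y‖ := by
    funext w; simp [Function.comp, Real.sqrt_sq (norm_nonneg _)]
  rw [hfun] at hsqrt
  refine hsqrt.congr_fderiv ?_
  ext v
  rw [Real.sqrt_sq (norm_nonneg _)]
  simp only [ContinuousLinearMap.smul_apply, ContinuousLinearMap.coe_comp', Function.comp_apply,
    ContinuousLinearMap.coe_id', id_eq, smul_eq_mul, nsmul_eq_mul]
  field_simp
  ring

lemma hasFDerivAt_radial (y : V3) (F : ℝ → ℂ) (F' : ℂ) {z : V3} (hz : z ≠ y)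
    (hF : HasDerivAt F F' ‖z - y‖) :
    HasFDerivAt (fun w : V3 => F ‖w - y‖)
      ((ContinuousLinearMap.smulRight (1 : ℝ →L[ℝ] ℝ) F').comp
        ((‖z - y‖)⁻¹ • (innerSL ℝ (z - y)))) z :=
  (hF.hasFDerivAt).comp z (hasFDerivAt_norm_sub y hz)

lemma pd_radial (y : V3) (F : ℝ → ℂ) (F' : ℂ) {z : V3} (hz : z ≠ y)
    (hF : HasDerivAt F F' ‖z - y‖) (i : Fin 3) :
    pd i (fun w : V3 => F ‖w - y‖) z
      = (((‖z - y‖)⁻¹ : ℝ) : ℂ) * ((z i - y i : ℝ) : ℂ) * F' := by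
  rw [pd, (hasFDerivAt_radial y F F' hz hF).fderiv]
  simp only [ContinuousLinearMap.coe_comp', Function.comp_apply,
    ContinuousLinearMap.smul_apply, ContinuousLinearMap.smulRight_apply,
    ContinuousLinearMap.one_apply, innerSL_apply_apply, smul_eq_mul]
  rw [EuclideanSpace.inner_single_right]
  simp [Complex.real_smul]

set_option maxHeartbeats 1000000 in
/-- Regularized expression for the traction of `E₁₂` in `x`:
`T(∂_x,ν)E₁₂ = (γ/(k₁²−k₂²)) ν (k₁²γ_{k₁} − k₂²γ_{k₂})
− (2μγ/((k₁²−k₂²)(λ+2μ))) M(∂_x,ν)(∇_x[γ_{k₁}−γ_{k₂}])`, componentwise. -/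
theorem stmt_13 (lam μ gam : ℝ) (hμ : 0 < μ) (hlam : 0 < lam + 2 * μ)
    (k1 k2 : ℂ) (hne : k1 ^ 2 ≠ k2 ^ 2)
    (ν : Fin 3 → ℝ) (y x : V3) (hxy : x ≠ y) (i : Fin 3) :
    traction lam μ ν (fun j => fun z => E12 lam μ gam k1 k2 j z y) i x
      = ((gam : ℂ) / (k1 ^ 2 - k2 ^ 2)) * (ν i : ℂ) *
          (k1 ^ 2 * gammaK k1 x y - k2 ^ 2 * gammaK k2 x y)
        - (2 * (μ : ℂ) * (gam : ℂ) /
            ((k1 ^ 2 - k2 ^ 2) * ((lam : ℂ) + 2 * (μ : ℂ)))) *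
          gunterM ν (fun j => pd j (fun w => gammaK k1 w y - gammaK k2 w y)) i x := by
  classical
  have hxy' : x - y ≠ 0 := sub_ne_zero.mpr hxy
  have ht : ‖x - y‖ ≠ 0 := norm_ne_zero_iff.mpr hxy'
  have htC : ((‖x - y‖ : ℝ) : ℂ) ≠ 0 := by exact_mod_cast ht
  -- first derivative formula at any z ≠ y
  have hpd1 : ∀ (z : V3), z ≠ y → ∀ m : Fin 3,
      pd m (fun w => gammaK k1 w y - gammaK k2 w y) z
        = (g1 k1 ‖z - y‖ - g1 k2 ‖z - y‖) * ((z m - y m : ℝ) : ℂ) := by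
    intro z hz m
    have htz : ‖z - y‖ ≠ 0 := norm_ne_zero_iff.mpr (sub_ne_zero.mpr hz)
    have htzC : ((‖z - y‖ : ℝ) : ℂ) ≠ 0 := by exact_mod_cast htz
    have hF := (hasDerivAt_g0 k1 htz).sub (hasDerivAt_g0 k2 htz)
    have h := pd_radial y (fun s => g0 k1 s - g0 k2 s) _ hz hF m
    rw [show (fun w : V3 => gammaK k1 w y - gammaK k2 w y)
        = (fun w : V3 => g0 k1 ‖w - y‖ - g0 k2 ‖w - y‖) from rfl]
    rw [h]
    push_cast
    field_simp
  have hmem : {w : V3 | w ≠ y} ∈ nhds x := isOpen_ne.mem_nhds hxy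
  have heq : ∀ m : Fin 3, pd m (fun w => gammaK k1 w y - gammaK k2 w y)
      =ᶠ[nhds x] (fun z : V3 => (g1 k1 ‖z - y‖ - g1 k2 ‖z - y‖) * ((z m - y m : ℝ) : ℂ)) := by
    intro m
    filter_upwards [hmem] with z hz
    exact hpd1 z hz m
  have hg1d := (hasDerivAt_g1 k1 ht).sub (hasDerivAt_g1 k2 ht)
  have hG1F := hasFDerivAt_radial y (fun s => g1 k1 s - g1 k2 s) _ hxy hg1d
  have hcoord : ∀ m : Fin 3, HasFDerivAt (fun z : V3 => ((z m - y m : ℝ) : ℂ))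
      (Complex.ofRealCLM.comp (EuclideanSpace.proj m)) x := by
    intro m
    have h1 : HasFDerivAt (fun z : V3 => z m - y m) (EuclideanSpace.proj m : V3 →L[ℝ] ℝ) x :=
      ((EuclideanSpace.proj m : V3 →L[ℝ] ℝ).hasFDerivAt).sub_const (y m)
    exact Complex.ofRealCLM.hasFDerivAt.comp x h1
  have hpd2 : ∀ l m : Fin 3, pd l (pd m (fun w => gammaK k1 w y - gammaK k2 w y)) x
      = ((g2 k1 ‖x - y‖ - g2 k2 ‖x - y‖) / ((‖x - y‖ : ℝ) : ℂ)) * ((x l - y l : ℝ) : ℂ)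
          * ((x m - y m : ℝ) : ℂ)
        + (g1 k1 ‖x - y‖ - g1 k2 ‖x - y‖) * (if l = m then 1 else 0) := by
    intro l m
    have hprod : HasFDerivAt (fun z : V3 => (g1 k1 ‖z - y‖ - g1 k2 ‖z - y‖) * ((z m - y m : ℝ) : ℂ)) _ x :=
      hG1F.mul (hcoord m)
    rw [pd, (heq m).fderiv_eq, hprod.fderiv]
    simp only [ContinuousLinearMap.add_apply, ContinuousLinearMap.smul_apply,
      ContinuousLinearMap.coe_comp', Function.comp_apply, ContinuousLinearMap.smulRight_apply,
      ContinuousLinearMap.one_apply, innerSL_apply_apply, Complex.ofRealCLM_apply, smul_eq_mul]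
    rw [EuclideanSpace.inner_single_right]
    simp only [PiLp.proj_apply, EuclideanSpace.single_apply, PiLp.sub_apply,
      Complex.real_smul, starRingEnd_apply, star_trivial]
    by_cases hlm : l = m
    · subst hlm
      simp only [if_pos rfl]
      push_cast
      field_simp
      ring
    · simp only [if_neg hlm, if_neg (Ne.symm hlm)]
      push_cast
      field_simp
      ring
  have hdiff : ∀ m : Fin 3,
      DifferentiableAt ℝ (pd m (fun w => gammaK k1 w y - gammaK k2 w y)) x := by
    intro m
    exact ((heq m).differentiableAt_iff).mpr (hG1F.mul (hcoord m)).differentiableAt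
  have hv : ∀ l j : Fin 3, pd l (fun z => E12 lam μ gam k1 k2 j z y) x
      = -((gam : ℂ) / ((k1 ^ 2 - k2 ^ 2) * ((lam : ℂ) + 2 * (μ : ℂ))))
        * pd l (pd j (fun w => gammaK k1 w y - gammaK k2 w y)) x := by
    intro l j
    rw [show (fun z : V3 => E12 lam μ gam k1 k2 j z y)
        = (fun z : V3 => -((gam : ℂ) / ((k1 ^ 2 - k2 ^ 2) * ((lam : ℂ) + 2 * (μ : ℂ))))
            * pd j (fun w => gammaK k1 w y - gammaK k2 w y) z) from rfl]
    rw [pd, fderiv_const_mul (hdiff j), ContinuousLinearMap.smul_apply, smul_eq_mul]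
    rfl
  have hsqR : ‖x - y‖ ^ 2 = (x 0 - y 0) ^ 2 + (x 1 - y 1) ^ 2 + (x 2 - y 2) ^ 2 := by
    rw [EuclideanSpace.norm_eq, Real.sq_sqrt (by positivity)]
    simp [Fin.sum_univ_three, sq_abs, PiLp.sub_apply]
  have hsq : ((x 0 - y 0 : ℝ) : ℂ) ^ 2 + ((x 1 - y 1 : ℝ) : ℂ) ^ 2 + ((x 2 - y 2 : ℝ) : ℂ) ^ 2
      = ((‖x - y‖ : ℝ) : ℂ) ^ 2 := by
    exact_mod_cast congrArg (fun r : ℝ => (r : ℂ)) hsqR.symm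
  have hA : ((g2 k1 ‖x - y‖ - g2 k2 ‖x - y‖) / ((‖x - y‖ : ℝ) : ℂ)) * ((‖x - y‖ : ℝ) : ℂ)
      = g2 k1 ‖x - y‖ - g2 k2 ‖x - y‖ := div_mul_cancel₀ _ htC
  have hk1 := lap_id k1 ht
  have hk2 := lap_id k2 ht
  have hS : k1 ^ 2 * gammaK k1 x y - k2 ^ 2 * gammaK k2 x y
      = -(((g2 k1 ‖x - y‖ - g2 k2 ‖x - y‖) / ((‖x - y‖ : ℝ) : ℂ))
            * (((x 0 - y 0 : ℝ) : ℂ) ^ 2 + ((x 1 - y 1 : ℝ) : ℂ) ^ 2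
              + ((x 2 - y 2 : ℝ) : ℂ) ^ 2)
          + 3 * (g1 k1 ‖x - y‖ - g1 k2 ‖x - y‖)) := by
    rw [show gammaK k1 x y = g0 k1 ‖x - y‖ from rfl, show gammaK k2 x y = g0 k2 ‖x - y‖ from rfl]
    linear_combination ((g2 k1 ‖x - y‖ - g2 k2 ‖x - y‖) / ((‖x - y‖ : ℝ) : ℂ)) * hsq
      + ((‖x - y‖ : ℝ) : ℂ) * hA + hk1 - hk2
  have hQ : (k1 ^ 2 - k2 ^ 2) ≠ 0 := sub_ne_zero.mpr hne
  have hP : ((lam : ℂ) + 2 * (μ : ℂ)) ≠ 0 := by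
    have h0 : (lam + 2 * μ : ℝ) ≠ 0 := ne_of_gt hlam
    intro hc
    apply h0
    exact_mod_cast hc
  -- opaque abbreviations
  obtain ⟨A, hA0⟩ : ∃ A : ℂ, A = (g2 k1 ‖x - y‖ - g2 k2 ‖x - y‖) / ((‖x - y‖ : ℝ) : ℂ) := ⟨_, rfl⟩
  obtain ⟨B, hB0⟩ : ∃ B : ℂ, B = g1 k1 ‖x - y‖ - g1 k2 ‖x - y‖ := ⟨_, rfl⟩
  obtain ⟨C, hC0⟩ : ∃ C : ℂ, C = -((gam : ℂ) / ((k1 ^ 2 - k2 ^ 2) * ((lam : ℂ) + 2 * (μ : ℂ)))) := ⟨_, rfl⟩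
  rw [← hA0, ← hB0] at hpd2 hS
  rw [← hC0] at hv
  have hvdiv : vdiv (fun j => fun z => E12 lam μ gam k1 k2 j z y) x
      = C * (A * (((x 0 - y 0 : ℝ) : ℂ) ^ 2 + ((x 1 - y 1 : ℝ) : ℂ) ^ 2
          + ((x 2 - y 2 : ℝ) : ℂ) ^ 2) + 3 * B) := by
    simp only [vdiv, Fin.sum_univ_three, hv, hpd2, Fin.reduceEq, reduceIte]
    norm_num
    ring
  have hcurl : ∀ m : Fin 3, curl (fun j => fun z => E12 lam μ gam k1 k2 j z y) m x = 0 := by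
    intro m
    fin_cases m <;>
    · simp only [Fin.reduceFinMk, curl, Fin.sum_univ_three, hv, hpd2, Fin.reduceEq, reduceIte]
      simp (config := { decide := true }) only [eps]
      push_cast
      ring
  have hcross : crossR ν (fun m => curl (fun j => fun z => E12 lam μ gam k1 k2 j z y) m x) i
      = 0 := by
    simp only [crossR, Fin.sum_univ_three, hcurl]
    simp
  have hdir : ∀ p : Fin 3, dirD ν (fun z => E12 lam μ gam k1 k2 p z y) x
      = C * (A * ((ν 0 : ℂ) * ((x 0 - y 0 : ℝ) : ℂ) + (ν 1 : ℂ) * ((x 1 - y 1 : ℝ) : ℂ)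
          + (ν 2 : ℂ) * ((x 2 - y 2 : ℝ) : ℂ)) * ((x p - y p : ℝ) : ℂ) + B * (ν p : ℂ)) := by
    intro p
    fin_cases p <;>
    · simp only [Fin.reduceFinMk, dirD, Fin.sum_univ_three, hv, hpd2, Fin.reduceEq, reduceIte]
      norm_num
      ring
  have hgun : ∀ p : Fin 3, gunterM ν (fun j => pd j (fun w => gammaK k1 w y - gammaK k2 w y)) p x
      = A * ((ν 0 : ℂ) * ((x 0 - y 0 : ℝ) : ℂ) + (ν 1 : ℂ) * ((x 1 - y 1 : ℝ) : ℂ)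
          + (ν 2 : ℂ) * ((x 2 - y 2 : ℝ) : ℂ)) * ((x p - y p : ℝ) : ℂ) + B * (ν p : ℂ)
        - (ν p : ℂ) * (A * (((x 0 - y 0 : ℝ) : ℂ) ^ 2 + ((x 1 - y 1 : ℝ) : ℂ) ^ 2
          + ((x 2 - y 2 : ℝ) : ℂ) ^ 2) + 3 * B) := by
    intro p
    fin_cases p <;>
    · simp only [Fin.reduceFinMk, gunterM, Fin.sum_univ_three, hpd2, Fin.reduceEq, reduceIte]
      norm_num
      ring
  simp only [traction]
  rw [hdir i, hvdiv, hcross, hgun i, hS, hC0]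
  field_simp
  ring
end
end
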